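/- arXiv:1505.03829 — 4 statements merged into one kernel-verified Lean document; each statement's English description precedes it below -/
import Mathlib

section
/- Let n ≥ 1 and let A be any commutative ring. Then: (a) the set of products Aˣ·V₊(A)·V₋(A) equals {f ∈ Lⁿ(A) : coeff₀(f) ∈ Aˣ and f₋ = Σ_{l<0} coeff_l(f) t^l is nilpotent in Lⁿ(A)}; (b) the set of products (1+Nil(A))·V₊(A)·V₋(A), where Nil(A) is the nilradical of A, equals {f ∈ Lⁿ(A) : coeff₀(f) − 1 is nilpotent in A and f₋ is nilpotent in Lⁿ(A)}. In particular, both sets consist of units and are subgroups of Lⁿ(A)ˣ. -/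
noncomputable section

open scoped Classical TensorProduct

/-- Iterated Laurent series carrier together with its ring structure. -/
def IterAux (A : Type) [CommRing A] : ℕ → (T : Type) × CommRing T
  | 0 => ⟨A, inferInstance⟩
  | n+1 =>
    letI := (IterAux A n).2
    ⟨LaurentSeries (IterAux A n).1, inferInstance⟩

/-- `IterLaurent A n = A((t₁))…((tₙ))`, the ring of iterated Laurent series:
`IterLaurent A 0 = A` and `IterLaurent A (n+1) = (IterLaurent A n)((t_{n+1}))`. -/
def IterLaurent (A : Type) [CommRing A] (n : ℕ) : Type := (IterAux A n).1

instance iterLaurentCommRing (A : Type) [CommRing A] (n : ℕ) : CommRing (IterLaurent A n) :=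
  (IterAux A n).2

/-- View an iterated Laurent series as a Laurent series over the previous stage. -/
def IterLaurent.down {A : Type} [CommRing A] {n : ℕ} (f : IterLaurent A (n+1)) :
    LaurentSeries (IterLaurent A n) := f

/-- View a Laurent series over the previous stage as an iterated Laurent series. -/
def IterLaurent.up {A : Type} [CommRing A] {n : ℕ} (f : LaurentSeries (IterLaurent A n)) :
    IterLaurent A (n+1) := f

/-- The coefficient of `t^l = t₁^{l₁}⋯tₙ^{lₙ}` in an iterated Laurent series. -/
def iterCoeff (A : Type) [CommRing A] : {n : ℕ} → IterLaurent A n → (Fin n → ℤ) → A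
  | 0, f, _ => f
  | n+1, f, l => iterCoeff A (f.down.coeff (l (Fin.last n))) (fun i => l i.castSucc)

/-- The lexicographic order on `ℤⁿ` "from the last coordinate":
`l < l'` iff `lₙ < l'ₙ`, or `lₙ = l'ₙ` and `(l₁,…,l_{n-1}) < (l'₁,…,l'_{n-1})`. -/
def lexLt : {n : ℕ} → (Fin n → ℤ) → (Fin n → ℤ) → Prop
  | 0, _, _ => False
  | n+1, a, b => a (Fin.last n) < b (Fin.last n) ∨
      (a (Fin.last n) = b (Fin.last n) ∧
        lexLt (fun i => a i.castSucc) (fun i => b i.castSucc))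

/-- The monomial `t^l = t₁^{l₁} ⋯ tₙ^{lₙ}`. -/
def tpow (A : Type) [CommRing A] : {n : ℕ} → (Fin n → ℤ) → IterLaurent A n
  | 0, _ => 1
  | n+1, l => IterLaurent.up
      (HahnSeries.single (l (Fin.last n)) (tpow A (fun i => l i.castSucc)))

/-- Constant series, as a ring homomorphism `A →+* A((t₁))…((tₙ))`. -/
def iterC (A : Type) [CommRing A] : (n : ℕ) → A →+* IterLaurent A n
  | 0 => RingHom.id A
  | n+1 => (HahnSeries.C : (IterLaurent A n) →+* LaurentSeries (IterLaurent A n)).comp (iterC A n)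

/-- The truncation `f₋ = Σ_{l<0} coeff_l(f) t^l` (strictly negative part w.r.t. the
lexicographic order from the last coordinate). -/
def truncNeg (A : Type) [CommRing A] : {n : ℕ} → IterLaurent A n → IterLaurent A n
  | 0, _ => 0
  | n+1, f => IterLaurent.up
      { coeff := fun k =>
          if k < 0 then f.down.coeff k else if k = 0 then truncNeg A (f.down.coeff 0) else 0
        isPWO_support' := by
          refine (f.down.isPWO_support.union (Set.finite_singleton 0).isPWO).mono ?_
          intro k hk
          simp only [Function.mem_support] at hk
          rcases lt_trichotomy k 0 with h | h | h
          · left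
            simp only [if_pos h] at hk
            exact hk
          · right; simp [h]
          · exfalso; apply hk; rw [if_neg (not_lt.2 h.le), if_neg h.ne'] }

/-- The truncation `f_{≤0} = Σ_{l≤0} coeff_l(f) t^l` (nonpositive part). -/
def truncNonpos (A : Type) [CommRing A] : {n : ℕ} → IterLaurent A n → IterLaurent A n
  | 0, f => f
  | n+1, f => IterLaurent.up
      { coeff := fun k =>
          if k < 0 then f.down.coeff k else if k = 0 then truncNonpos A (f.down.coeff 0) else 0
        isPWO_support' := by
          refine (f.down.isPWO_support.union (Set.finite_singleton 0).isPWO).mono ?_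
          intro k hk
          simp only [Function.mem_support] at hk
          rcases lt_trichotomy k 0 with h | h | h
          · left
            simp only [if_pos h] at hk
            exact hk
          · right; simp [h]
          · exfalso; apply hk; rw [if_neg (not_lt.2 h.le), if_neg h.ne'] }

/-- `V₊(A)`: iterated Laurent series with constant term `1` and no nonzero
coefficients below `0`. -/
def MemVplus (A : Type) [CommRing A] {n : ℕ} (f : IterLaurent A n) : Prop :=
  iterCoeff A f 0 = 1 ∧ ∀ l, lexLt l 0 → iterCoeff A f l = 0

/-- `V₋(A)`: iterated Laurent series with constant term `1`, no nonzero coefficients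
above `0`, and `f - 1` nilpotent in `Lⁿ(A)`. -/
def MemVminus (A : Type) [CommRing A] {n : ℕ} (f : IterLaurent A n) : Prop :=
  iterCoeff A f 0 = 1 ∧ (∀ l, lexLt 0 l → iterCoeff A f l = 0) ∧ IsNilpotent (f - 1)

/-- `(Lⁿ𝔾ₘ)⁰(A)`: invertible constant term and nilpotent strictly negative part. -/
def MemZeroMul (A : Type) [CommRing A] {n : ℕ} (f : IterLaurent A n) : Prop :=
  IsUnit (iterCoeff A f 0) ∧ IsNilpotent (truncNeg A f)

/-- `(Lⁿ𝔾ₘ)^♯(A)`: constant term `1 + nilpotent` and nilpotent strictly negative part. -/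
def MemSharpMul (A : Type) [CommRing A] {n : ℕ} (f : IterLaurent A n) : Prop :=
  IsNilpotent (iterCoeff A f 0 - 1) ∧ IsNilpotent (truncNeg A f)

/-- `(Lⁿ𝔾ₐ)^♯(A)`: nilpotent nonpositive part. -/
def MemSharpAdd (A : Type) [CommRing A] {n : ℕ} (g : IterLaurent A n) : Prop :=
  IsNilpotent (truncNonpos A g)

/-- The residue: the coefficient of `t₁⁻¹⋯tₙ⁻¹`. -/
def iterRes (A : Type) [CommRing A] {n : ℕ} (f : IterLaurent A n) : A :=
  iterCoeff A f (fun _ => -1)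

/-- The derivative with respect to the outer Laurent variable:
`coeff k ↦ (k+1) • coeff (k+1)`. -/
def hahnDerivHom (B : Type) [CommRing B] : LaurentSeries B →+ LaurentSeries B where
  toFun f :=
    { coeff := fun k => (k + 1) • f.coeff (k + 1)
      isPWO_support' := by
        have himg : (Function.support fun k : ℤ => (k + 1) • f.coeff (k + 1)) ⊆
            (fun k : ℤ => k - 1) '' f.support := by
          intro k hk
          simp only [Function.mem_support] at hk
          refine ⟨k + 1, ?_, by ring⟩
          intro h0
          apply hk
          rw [h0, smul_zero]
        exact (f.isPWO_support.image_of_monotone (fun a b hab => by omega)).mono himg }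
  map_zero' := by ext k; simp
  map_add' f g := by ext k; simp [smul_add]

/-- Coefficientwise application of an additive map, on Laurent series. -/
def hahnMapHom {B C : Type} [CommRing B] [CommRing C] (φ : B →+ C) :
    HahnSeries ℤ B →+ HahnSeries ℤ C where
  toFun f := f.map φ
  map_zero' := by ext; simp
  map_add' f g := by ext; simp

/-- The formal partial derivative `∂/∂tⱼ` as an additive map: it is characterized by
`coeff_l (∂f/∂tⱼ) = (lⱼ + 1) • coeff_{l + eⱼ} f`. -/
def pderivHom (A : Type) [CommRing A] : {n : ℕ} → Fin n → (IterLaurent A n →+ IterLaurent A n)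
  | 0, j => j.elim0
  | n+1, j =>
    show HahnSeries ℤ (IterLaurent A n) →+ HahnSeries ℤ (IterLaurent A n) from
    if h : (j : ℕ) < n then
      hahnMapHom (B := IterLaurent A n) (C := IterLaurent A n) (pderivHom A (⟨j, h⟩ : Fin n))
    else hahnDerivHom (IterLaurent A n)

/-- The formal partial derivative `∂f/∂tⱼ` of an iterated Laurent series. -/
def pderivIter (A : Type) [CommRing A] {n : ℕ} (j : Fin n) (f : IterLaurent A n) :
    IterLaurent A n := pderivHom A j f

/-- Coefficientwise application of a ring homomorphism, on Laurent series. -/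
def hahnMapRingHom {B C : Type} [CommRing B] [CommRing C] (φ : B →+* C) :
    HahnSeries ℤ B →+* HahnSeries ℤ C where
  toFun f := f.map φ
  map_one' := by
    ext g
    by_cases h : g = 0 <;> simp [h]
  map_mul' x y := by
    have h := HahnSeries.map_mul (Γ := ℤ) (f := (φ : B →ₙ+* C)) (x := x) (y := y)
    ext g
    have := congrArg (fun z : HahnSeries ℤ C => z.coeff g) h
    exact this
  map_zero' := by ext; simp
  map_add' x y := by ext; simp

/-- The ring homomorphism `Lⁿ(A) →+* Lⁿ(B)` induced by `σ : A →+* B`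
(functoriality of iterated Laurent series). -/
def iterMap {A B : Type} [CommRing A] [CommRing B] (σ : A →+* B) :
    (n : ℕ) → (IterLaurent A n →+* IterLaurent B n)
  | 0 => σ
  | n+1 =>
    show HahnSeries ℤ (IterLaurent A n) →+* HahnSeries ℤ (IterLaurent B n) from
    hahnMapRingHom (B := IterLaurent A n) (C := IterLaurent B n) (iterMap σ n)

theorem tpow_zero (A : Type) [CommRing A] : ∀ {n : ℕ}, tpow A (0 : Fin n → ℤ) = 1
  | 0 => rfl
  | n+1 => by
    show IterLaurent.up (HahnSeries.single ((0 : Fin (n+1) → ℤ) (Fin.last n))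
      (tpow A fun i => (0 : Fin (n+1) → ℤ) i.castSucc)) = 1
    have h1 : (fun i : Fin n => (0 : Fin (n+1) → ℤ) i.castSucc) = (0 : Fin n → ℤ) := rfl
    rw [h1, tpow_zero A]
    exact congrArg IterLaurent.up (HahnSeries.single_zero_one)

theorem tpow_mul_tpow (A : Type) [CommRing A] :
    ∀ {n : ℕ} (l l' : Fin n → ℤ), tpow A l * tpow A l' = tpow A (l + l')
  | 0, _, _ => one_mul 1
  | n+1, l, l' => by
    show IterLaurent.up (HahnSeries.single (l (Fin.last n)) (tpow A fun i => l i.castSucc) *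
        HahnSeries.single (l' (Fin.last n)) (tpow A fun i => l' i.castSucc)) = _
    rw [HahnSeries.single_mul_single, tpow_mul_tpow A]
    rfl

/-- The variable `tᵢ` as a unit of `Lⁿ(A)`. -/
def tUnit (A : Type) [CommRing A] (n : ℕ) (i : Fin n) : (IterLaurent A n)ˣ where
  val := tpow A (fun j => if j = i then 1 else 0)
  inv := tpow A (fun j => if j = i then -1 else 0)
  val_inv := by
    rw [tpow_mul_tpow A]
    have : ((fun j : Fin n => if j = i then (1:ℤ) else 0) + fun j => if j = i then -1 else 0)
        = 0 := by funext j; by_cases h : j = i <;> simp [h]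
    rw [this, tpow_zero A]
  inv_val := by
    rw [tpow_mul_tpow A]
    have : ((fun j : Fin n => if j = i then (-1:ℤ) else 0) + fun j => if j = i then 1 else 0)
        = 0 := by funext j; by_cases h : j = i <;> simp [h]
    rw [this, tpow_zero A]

/-- A unit of `A` as a constant unit of `Lⁿ(A)`. -/
def constUnit (A : Type) [CommRing A] (n : ℕ) (a : Aˣ) : (IterLaurent A n)ˣ :=
  Units.map (iterC A n).toMonoidHom a

/-!
Write `f = s + f₋` with `s` supported in `l ≥ 0`. If `coeff₀ f` is a unit then so is `s` (invert
it as a power series, one variable at a time), hence `f = s (1 + s⁻¹ f₋)` is a unit when `f₋` is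
nilpotent; comparing constant terms modulo the nilradical gives the group laws.

For the factorization, look at the last variable `t` over `B = Lⁿ⁻¹(A)`. The negative coefficients
of `f` generate a finitely generated nil, hence nilpotent, ideal `I`. Write `f = s (1 + ε)` and let
`ε₋` be the part of `ε` in negative degrees: then `(1 + ε₋)⁻¹ (1 + ε)` has its negative
coefficients in `I²`. After finitely many rounds `f = C b · p · (1 + μ)` with `p ∈ B⟦t⟧`, `p(0) = 1`
and `μ` a nilpotent polynomial in `t⁻¹` without constant term. Then `b` is congruent to the
`t⁰`-coefficient of `f` modulo nilpotents, so `b` factors by induction on `n`.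
-/

section Nilpotent

variable {R : Type*} [CommRing R] {x y : R}

theorem IsUnit.of_isNilpotent_sub (hx : IsUnit x) (h : IsNilpotent (y - x)) : IsUnit y := by
  simpa using h.isUnit_add_right_of_commute hx (Commute.all _ _)

theorem isNilpotent_sub_comm :
    IsNilpotent (x - y) ↔ IsNilpotent (y - x) := by
  rw [← neg_sub, isNilpotent_neg_iff]

theorem isNilpotent_sub_iff_mk_eq :
    IsNilpotent (x - y) ↔
      Ideal.Quotient.mk (nilradical R) x = Ideal.Quotient.mk (nilradical R) y := by
  rw [Ideal.Quotient.eq, mem_nilradical]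

end Nilpotent

namespace HahnSeries

section Reduced

variable {Γ R : Type*} [AddCommMonoid Γ] [LinearOrder Γ] [IsOrderedCancelAddMonoid Γ]
  [CommRing R] [IsReduced R]

theorem leadingCoeff_pow_of_isReduced (x : HahnSeries Γ R) (k : ℕ) :
    (x ^ k).leadingCoeff = x.leadingCoeff ^ k := by
  rcases eq_or_ne x 0 with rfl | hx
  · cases k <;> simp
  induction k with
  | zero => simp
  | succ k ih =>
    have hne : (x ^ k).leadingCoeff * x.leadingCoeff ≠ 0 := by
      rw [ih, ← pow_succ]
      exact pow_ne_zero _ (leadingCoeff_ne_zero.2 hx)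
    rw [pow_succ, leadingCoeff_mul_of_ne_zero hne, ih, pow_succ]

instance : IsReduced (HahnSeries Γ R) :=
  ⟨fun x ⟨k, hk⟩ => by
    have := congrArg leadingCoeff hk
    rw [leadingCoeff_pow_of_isReduced, leadingCoeff_zero] at this
    exact leadingCoeff_eq_zero.1 (eq_zero_of_pow_eq_zero this)⟩

end Reduced

variable {B : Type} [CommRing B]

theorem isNilpotent_coeff_of_isNilpotent {x : LaurentSeries B} (hx : IsNilpotent x) (k : ℤ) :
    IsNilpotent (x.coeff k) := by
  have : IsReduced (B ⧸ nilradical B) :=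
    (Ideal.isRadical_iff_quotient_reduced _).1 (Ideal.radical_isRadical ⊥)
  rw [← mem_nilradical, ← Ideal.Quotient.eq_zero_iff_mem]
  exact congrArg (coeff · k)
    (hx.map (hahnMapRingHom (C := B ⧸ nilradical B) (Ideal.Quotient.mk _))).eq_zero

theorem isNilpotent_single {k : ℤ} {r : B} (hr : IsNilpotent r) :
    IsNilpotent (single k r : LaurentSeries B) := by
  obtain ⟨m, hm⟩ := hr
  exact ⟨m, by rw [single_pow, hm, single_eq_zero]⟩

theorem finite_support_truncLT_zero (x : LaurentSeries B) : (truncLT 0 x).support.Finite := by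
  refine BddBelow.finite_of_bddAbove ⟨x.order, fun k hk => ?_⟩ ⟨0, fun k hk => ?_⟩
  · exact order_le_of_coeff_ne_zero (support_truncLT_subset 0 x hk)
  · rw [support_truncLT] at hk
    exact hk.2.le

theorem isNilpotent_truncLT_zero {x : LaurentSeries B} (h : ∀ k < 0, IsNilpotent (x.coeff k)) :
    IsNilpotent (truncLT 0 x) := by
  have hfin := finite_support_truncLT_zero x
  have hsum : truncLT 0 x = ∑ k ∈ hfin.toFinset, single k ((truncLT 0 x).coeff k) := by
    ext j
    rw [coeff_sum, Finset.sum_eq_single j (fun k _ hkj => coeff_single_of_ne hkj.symm)]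
    · rw [coeff_single_same]
    · intro hj
      simpa using hj
  rw [hsum]
  refine isNilpotent_sum fun k hk => isNilpotent_single ?_
  rw [Set.Finite.mem_toFinset, support_truncLT] at hk
  rw [coeff_truncLT_of_lt hk.2]
  exact h k hk.2

theorem exists_coe_powerSeries_eq {x : LaurentSeries B} (hx : ∀ k < 0, x.coeff k = 0) :
    ∃ φ : PowerSeries B, (φ : LaurentSeries B) = x := by
  refine ⟨PowerSeries.mk fun n => x.coeff n, ?_⟩
  ext k
  rw [PowerSeries.coeff_coe]
  split_ifs with hk
  · exact (hx k hk).symm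
  · rw [PowerSeries.coeff_mk, Int.natAbs_of_nonneg (not_lt.1 hk)]

theorem coeff_coe_powerSeries_of_neg (φ : PowerSeries B) {k : ℤ} (hk : k < 0) :
    (φ : LaurentSeries B).coeff k = 0 := by
  rw [PowerSeries.coeff_coe, if_pos hk]

variable {x y : LaurentSeries B}

theorem coeff_mul_eq_zero_of_nonneg (hx : ∀ k < 0, x.coeff k = 0) (hy : ∀ k < 0, y.coeff k = 0)
    {k : ℤ} (hk : k < 0) : (x * y).coeff k = 0 := by
  obtain ⟨φ, rfl⟩ := exists_coe_powerSeries_eq hx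
  obtain ⟨ψ, rfl⟩ := exists_coe_powerSeries_eq hy
  rw [← PowerSeries.coe_mul, coeff_coe_powerSeries_of_neg _ hk]

theorem coeff_mul_zero_of_nonneg (hx : ∀ k < 0, x.coeff k = 0) (hy : ∀ k < 0, y.coeff k = 0) :
    (x * y).coeff 0 = x.coeff 0 * y.coeff 0 := by
  obtain ⟨φ, rfl⟩ := exists_coe_powerSeries_eq hx
  obtain ⟨ψ, rfl⟩ := exists_coe_powerSeries_eq hy
  rw [← PowerSeries.coe_mul, ← Nat.cast_zero, LaurentSeries.coeff_coe_powerSeries,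
    LaurentSeries.coeff_coe_powerSeries, LaurentSeries.coeff_coe_powerSeries,
    PowerSeries.coeff_zero_eq_constantCoeff, map_mul]

theorem exists_mul_eq_one_of_nonneg (hx : ∀ k < 0, x.coeff k = 0) (hu : IsUnit (x.coeff 0)) :
    ∃ y : LaurentSeries B, x * y = 1 ∧ ∀ k < 0, y.coeff k = 0 := by
  obtain ⟨φ, rfl⟩ := exists_coe_powerSeries_eq hx
  have hφ : IsUnit φ := by
    rw [PowerSeries.isUnit_iff_constantCoeff, ← PowerSeries.coeff_zero_eq_constantCoeff,
      ← LaurentSeries.coeff_coe_powerSeries]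
    exact hu
  obtain ⟨ψ, hψ⟩ := hφ.exists_right_inv
  exact ⟨ψ, by rw [← PowerSeries.coe_mul, hψ, PowerSeries.coe_one],
    fun k hk => coeff_coe_powerSeries_of_neg ψ hk⟩

theorem coeff_mul_eq_zero_of_neg (hx : ∀ k, 0 ≤ k → x.coeff k = 0)
    (hy : ∀ k, 0 ≤ k → y.coeff k = 0) {k : ℤ} (hk : 0 ≤ k) : (x * y).coeff k = 0 := by
  by_contra h
  obtain ⟨i, hi, j, hj, rfl⟩ := support_mul_subset (mem_support _ _ |>.2 h)
  have := mt (hx i) hi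
  have := mt (hy j) hj
  exact hk.not_gt (by simp only at *; omega)

variable {I J : Ideal B}

theorem coeff_mul_mem_of_left (hx : ∀ k, x.coeff k ∈ I) (k : ℤ) : (x * y).coeff k ∈ I := by
  rw [coeff_mul]
  exact I.sum_mem fun p _ => I.mul_mem_right _ (hx p.1)

theorem coeff_mul_mem_mul (hx : ∀ k, x.coeff k ∈ I) (hy : ∀ k, y.coeff k ∈ J) (k : ℤ) :
    (x * y).coeff k ∈ I * J := by
  rw [coeff_mul]
  exact Ideal.sum_mem _ fun p _ => Ideal.mul_mem_mul (hx p.1) (hy p.2)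

theorem coeff_truncLT_zero_mem {f : LaurentSeries B} (hf : ∀ k < 0, f.coeff k ∈ I) (k : ℤ) :
    (truncLT 0 f).coeff k ∈ I := by
  rw [HahnSeries.coeff_truncLT]
  split_ifs with hk
  exacts [hf k hk, I.zero_mem]

theorem exists_mul_one_add_mul_of_coeff_mem (hI : ∀ r ∈ I, IsNilpotent r) {f : LaurentSeries B}
    (h0 : IsUnit (f.coeff 0)) (hneg : ∀ k < 0, f.coeff k ∈ I) :
    ∃ s ε g : LaurentSeries B, (∀ k < 0, s.coeff k = 0) ∧ (∀ k, 0 ≤ k → ε.coeff k = 0) ∧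
      IsNilpotent ε ∧ IsUnit (g.coeff 0) ∧ (∀ k < 0, g.coeff k ∈ I ^ 2) ∧
      f = s * (1 + ε) * g := by
  obtain ⟨s, hs⟩ : ∃ s, s = f - truncLT 0 f := ⟨_, rfl⟩
  have hs_neg : ∀ k < 0, s.coeff k = 0 := fun k hk => by
    rw [hs, coeff_sub, coeff_truncLT_of_lt hk, sub_self]
  have hs0 : s.coeff 0 = f.coeff 0 := by
    rw [hs, coeff_sub, coeff_truncLT_of_le le_rfl, sub_zero]
  obtain ⟨y, hsy, -⟩ := exists_mul_eq_one_of_nonneg hs_neg (hs0 ▸ h0)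
  obtain ⟨ε₀, hε₀⟩ : ∃ ε₀, ε₀ = truncLT 0 f * y := ⟨_, rfl⟩
  have hε₀I : ∀ k, ε₀.coeff k ∈ I := hε₀ ▸ coeff_mul_mem_of_left (coeff_truncLT_zero_mem hneg)
  obtain ⟨ε, hε⟩ : ∃ ε, ε = truncLT 0 ε₀ := ⟨_, rfl⟩
  have hεI : ∀ k, ε.coeff k ∈ I := hε ▸ coeff_truncLT_zero_mem fun k _ => hε₀I k
  have hε_nil : IsNilpotent ε := hε ▸ isNilpotent_truncLT_zero fun k _ => hI _ (hε₀I k)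
  obtain ⟨δ, hδ⟩ : ∃ δ, δ = ε₀ - ε := ⟨_, rfl⟩
  have hδI : ∀ k, δ.coeff k ∈ I := fun k => hδ ▸ sub_mem (hε₀I k) (hεI k)
  obtain ⟨v, hv⟩ := hε_nil.isUnit_one_add.exists_right_inv
  -- since `v = 1 - ε * v`, the negative coefficients of `v * δ` are those of `-ε * (v * δ)`
  have hvδ : v * δ = δ - ε * (v * δ) := by linear_combination δ * hv
  have hvδI : ∀ k, (v * δ).coeff k ∈ I := mul_comm δ v ▸ coeff_mul_mem_of_left hδI
  refine ⟨s, ε, 1 + v * δ, hs_neg, fun k hk => ?_, hε_nil, ?_, fun k hk => ?_, ?_⟩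
  · rw [hε, coeff_truncLT_of_le hk]
  · rw [coeff_add, coeff_one, if_pos rfl]
    exact IsNilpotent.isUnit_one_add (hI _ (hvδI 0))
  · rw [coeff_add, coeff_one, if_neg hk.ne, zero_add, hvδ, coeff_sub, hδ, coeff_sub, hε,
      coeff_truncLT_of_lt hk, sub_self, zero_sub, ← hε, ← hδ, pow_two]
    exact neg_mem (coeff_mul_mem_mul hεI hvδI k)
  · rw [hδ, hε₀]
    linear_combination (-(s * (truncLT 0 f * y - ε))) * hv - truncLT 0 f * hsy - hs

theorem exists_mul_one_add_of_pow_eq_bot (N : ℕ) (I : Ideal B) (hI : I ^ 2 ^ N = ⊥)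
    {f : LaurentSeries B} (h0 : IsUnit (f.coeff 0)) (hneg : ∀ k < 0, f.coeff k ∈ I) :
    ∃ p μ : LaurentSeries B, (∀ k < 0, p.coeff k = 0) ∧ (∀ k, 0 ≤ k → μ.coeff k = 0) ∧
      IsNilpotent μ ∧ f = p * (1 + μ) := by
  induction N generalizing I f with
  | zero =>
    rw [pow_zero, pow_one] at hI
    refine ⟨f, 0, fun k hk => ?_, fun k _ => coeff_zero, .zero, by rw [add_zero, mul_one]⟩
    simpa [hI] using hneg k hk
  | succ N ih =>
    have hI_nil : ∀ r ∈ I, IsNilpotent r := fun r hr =>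
      ⟨2 ^ (N + 1), by simpa [hI] using Ideal.pow_mem_pow hr (2 ^ (N + 1))⟩
    obtain ⟨s, ε, g, hs, hε, hε_nil, hg0, hg, rfl⟩ :=
      exists_mul_one_add_mul_of_coeff_mem hI_nil h0 hneg
    obtain ⟨p, μ, hp, hμ, hμ_nil, rfl⟩ :=
      ih (I ^ 2) (by rw [← pow_mul, ← pow_succ', hI]) hg0 hg
    refine ⟨s * p, ε + μ + ε * μ, fun k hk => coeff_mul_eq_zero_of_nonneg hs hp hk,
      fun k hk => ?_, ?_, by ring⟩
    · rw [coeff_add, coeff_add, hε k hk, hμ k hk, coeff_mul_eq_zero_of_neg hε hμ hk]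
      simp
    · exact (Commute.all _ _).isNilpotent_add ((Commute.all _ _).isNilpotent_add hε_nil hμ_nil)
        ((Commute.all _ _).isNilpotent_mul_right hε_nil)

theorem exists_mul_one_add {f : LaurentSeries B} (h0 : IsUnit (f.coeff 0))
    (hneg : ∀ k < 0, IsNilpotent (f.coeff k)) :
    ∃ p μ : LaurentSeries B, (∀ k < 0, p.coeff k = 0) ∧ (∀ k, 0 ≤ k → μ.coeff k = 0) ∧
      IsNilpotent μ ∧ f = p * (1 + μ) := by
  let I := Ideal.span (f.coeff '' (truncLT 0 f).support)
  have hI : I ≤ (⊥ : Ideal B).radical := by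
    refine Ideal.span_le.2 ?_
    rintro _ ⟨k, hk, rfl⟩
    rw [support_truncLT] at hk
    exact hneg k hk.2
  obtain ⟨N, hN⟩ := Ideal.exists_pow_le_of_le_radical_of_fg hI
    (Submodule.fg_span ((finite_support_truncLT_zero f).image _))
  refine exists_mul_one_add_of_pow_eq_bot N I ?_ h0 fun k hk => ?_
  · exact le_bot_iff.1 ((Ideal.pow_le_pow_right Nat.lt_two_pow_self.le).trans hN)
  · by_cases hfk : f.coeff k = 0
    · exact hfk ▸ I.zero_mem
    · refine Ideal.subset_span ⟨k, ?_, rfl⟩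
      rw [support_truncLT]
      exact ⟨hfk, hk⟩

theorem coeff_C_mul (r : B) (x : LaurentSeries B) (k : ℤ) : (C r * x).coeff k = r * x.coeff k := by
  rw [C_apply, coeff_single_zero_mul]

theorem exists_C_mul_mul_one_add {f : LaurentSeries B} (h0 : IsUnit (f.coeff 0))
    (hneg : ∀ k < 0, IsNilpotent (f.coeff k)) :
    ∃ (b : B) (p μ : LaurentSeries B), IsNilpotent (b - f.coeff 0) ∧ (∀ k < 0, p.coeff k = 0) ∧
      p.coeff 0 = 1 ∧ (∀ k, 0 ≤ k → μ.coeff k = 0) ∧ IsNilpotent μ ∧ f = C b * p * (1 + μ) := by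
  obtain ⟨p, μ, hp, hμ, hμ_nil, rfl⟩ := exists_mul_one_add h0 hneg
  have hb : IsNilpotent (p.coeff 0 - (p * (1 + μ)).coeff 0) := by
    rw [mul_one_add, coeff_add, sub_add_cancel_left]
    exact (isNilpotent_coeff_of_isNilpotent
      ((Commute.all p μ).isNilpotent_mul_left hμ_nil) 0).neg
  have hu : IsUnit (p.coeff 0) := h0.of_isNilpotent_sub hb
  refine ⟨p.coeff 0, C (↑hu.unit⁻¹ : B) * p, μ, hb, fun k hk => ?_, ?_, hμ, hμ_nil, ?_⟩
  · rw [coeff_C_mul, hp k hk, mul_zero]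
  · rw [coeff_C_mul, IsUnit.val_inv_mul]
  · rw [← mul_assoc, ← map_mul, IsUnit.mul_val_inv, map_one, one_mul]

end HahnSeries

namespace IterLaurent

variable {A : Type} [CommRing A] {n : ℕ}

theorem down_add (f g : IterLaurent A (n + 1)) : (f + g).down = f.down + g.down := rfl

theorem down_sub (f g : IterLaurent A (n + 1)) : (f - g).down = f.down - g.down := rfl

theorem down_mul (f g : IterLaurent A (n + 1)) : (f * g).down = f.down * g.down := rfl

theorem down_one : (1 : IterLaurent A (n + 1)).down = 1 := rfl

theorem down_up (x : LaurentSeries (IterLaurent A n)) : (up x : IterLaurent A (n + 1)).down = x :=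
  rfl

theorem down_iterC (a : A) : (iterC A (n + 1) a).down = HahnSeries.C (iterC A n a) := rfl

theorem down_injective : Function.Injective (down : IterLaurent A (n + 1) → _) := fun _ _ h => h

theorem isNilpotent_down_iff {f : IterLaurent A (n + 1)} : IsNilpotent f.down ↔ IsNilpotent f :=
  Iff.rfl

end IterLaurent

open IterLaurent HahnSeries

section Coefficients

variable {A : Type} [CommRing A]

theorem lexLt_snoc {n : ℕ} (l l' : Fin n → ℤ) (k k' : ℤ) :
    lexLt (Fin.snoc l k : Fin (n + 1) → ℤ) (Fin.snoc l' k') ↔ k < k' ∨ k = k' ∧ lexLt l l' := by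
  simp [lexLt]

theorem Fin.forall_iff_forall_snoc {n : ℕ} {α : Type*} {P : (Fin (n + 1) → α) → Prop} :
    (∀ l, P l) ↔ ∀ l k, P (Fin.snoc l k) :=
  ⟨fun h _ _ => h _, fun h l => Fin.snoc_init_self l ▸ h _ _⟩

theorem zero_eq_snoc {n : ℕ} : (0 : Fin (n + 1) → ℤ) = Fin.snoc (0 : Fin n → ℤ) 0 := by
  rw [← Fin.snoc_init_self 0]
  rfl

theorem iterCoeff_snoc {n : ℕ} (f : IterLaurent A (n + 1)) (l : Fin n → ℤ) (k : ℤ) :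
    iterCoeff A f (Fin.snoc l k) = iterCoeff A (f.down.coeff k) l := by
  simp [iterCoeff]

theorem iterCoeff_succ_zero {n : ℕ} (f : IterLaurent A (n + 1)) :
    iterCoeff A f 0 = iterCoeff A (f.down.coeff 0) 0 := rfl

theorem iterCoeff_zero : ∀ {n : ℕ} (l : Fin n → ℤ), iterCoeff A (0 : IterLaurent A n) l = 0
  | 0, _ => rfl
  | n + 1, l => iterCoeff_zero (n := n) (fun i => l i.castSucc)

theorem iterCoeff_add : ∀ {n : ℕ} (f g : IterLaurent A n) (l : Fin n → ℤ),
    iterCoeff A (f + g) l = iterCoeff A f l + iterCoeff A g l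
  | 0, _, _, _ => rfl
  | _ + 1, f, g, _ => iterCoeff_add (f.down.coeff _) (g.down.coeff _) _

theorem iterCoeff_sub : ∀ {n : ℕ} (f g : IterLaurent A n) (l : Fin n → ℤ),
    iterCoeff A (f - g) l = iterCoeff A f l - iterCoeff A g l
  | 0, _, _, _ => rfl
  | _ + 1, f, g, _ => iterCoeff_sub (f.down.coeff _) (g.down.coeff _) _

theorem iterCoeff_one_zero : ∀ {n : ℕ}, iterCoeff A (1 : IterLaurent A n) 0 = 1
  | 0 => rfl
  | n + 1 => by rw [iterCoeff_succ_zero, down_one, coeff_one, if_pos rfl, iterCoeff_one_zero]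

theorem iterCoeff_iterC_mul : ∀ {n : ℕ} (a : A) (f : IterLaurent A n) (l : Fin n → ℤ),
    iterCoeff A (iterC A n a * f) l = a * iterCoeff A f l
  | 0, _, _, _ => rfl
  | _ + 1, a, f, l => by
    rw [← Fin.snoc_init_self l, iterCoeff_snoc, iterCoeff_snoc, down_mul, down_iterC, coeff_C_mul,
      iterCoeff_iterC_mul]

theorem forall_iterCoeff_eq_zero_iff : ∀ {n : ℕ} {f : IterLaurent A n},
    (∀ l, iterCoeff A f l = 0) ↔ f = 0
  | 0, _ => ⟨fun h => h 0, fun h _ => h⟩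
  | _ + 1, f => by
    refine ⟨fun h => down_injective ?_, fun h l => h ▸ iterCoeff_zero l⟩
    ext k
    exact forall_iterCoeff_eq_zero_iff.1 fun l => iterCoeff_snoc f l k ▸ h _

theorem isNilpotent_iterCoeff : ∀ {n : ℕ} {f : IterLaurent A n}, IsNilpotent f →
    ∀ l, IsNilpotent (iterCoeff A f l)
  | 0, _, hf, _ => hf
  | _ + 1, _, hf, _ =>
    isNilpotent_iterCoeff (isNilpotent_coeff_of_isNilpotent (isNilpotent_down_iff.2 hf) _) _

end Coefficients

namespace IterLaurent

variable {A : Type} [CommRing A] {n : ℕ}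

def HasNonnegSupport (f : IterLaurent A n) : Prop := ∀ l, lexLt l 0 → iterCoeff A f l = 0

def HasNonposSupport (f : IterLaurent A n) : Prop := ∀ l, lexLt 0 l → iterCoeff A f l = 0

theorem forall_iterCoeff_snoc_eq_zero_iff {f : IterLaurent A (n + 1)} (P : ℤ → Prop)
    (Q : (Fin n → ℤ) → Prop) :
    (∀ l k, P k ∨ k = 0 ∧ Q l → iterCoeff A f (Fin.snoc l k) = 0) ↔
      (∀ k, P k → f.down.coeff k = 0) ∧ ∀ l, Q l → iterCoeff A (f.down.coeff 0) l = 0 := by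
  simp only [iterCoeff_snoc, or_imp, and_imp, forall_and, forall_eq]
  exact and_congr_left' ⟨fun h k hk => forall_iterCoeff_eq_zero_iff.1 fun l => h l k hk,
    fun h l k hk => by rw [h k hk, iterCoeff_zero]⟩

theorem hasNonnegSupport_succ_iff {f : IterLaurent A (n + 1)} :
    HasNonnegSupport f ↔ (∀ k < 0, f.down.coeff k = 0) ∧ HasNonnegSupport (f.down.coeff 0) := by
  refine Fin.forall_iff_forall_snoc.trans ((forall₂_congr fun l k => ?_).trans
    (forall_iterCoeff_snoc_eq_zero_iff (· < 0) (lexLt · 0)))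
  rw [zero_eq_snoc, lexLt_snoc]

theorem hasNonposSupport_succ_iff {f : IterLaurent A (n + 1)} :
    HasNonposSupport f ↔ (∀ k > 0, f.down.coeff k = 0) ∧ HasNonposSupport (f.down.coeff 0) := by
  refine Fin.forall_iff_forall_snoc.trans ((forall₂_congr fun l k => ?_).trans
    (forall_iterCoeff_snoc_eq_zero_iff (0 < ·) (lexLt 0 ·)))
  rw [zero_eq_snoc, lexLt_snoc, @eq_comm _ 0 k]

theorem hasNonnegSupport_one : ∀ {n : ℕ}, HasNonnegSupport (1 : IterLaurent A n)
  | 0 => fun _ h => h.elim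
  | _ + 1 => hasNonnegSupport_succ_iff.2
    ⟨fun k hk => by rw [down_one, coeff_one, if_neg hk.ne],
      by rw [down_one, coeff_one, if_pos rfl]; exact hasNonnegSupport_one⟩

theorem HasNonnegSupport.iterC_mul {f : IterLaurent A n} (hf : HasNonnegSupport f) (a : A) :
    HasNonnegSupport (iterC A n a * f) := fun l hl => by
  rw [iterCoeff_iterC_mul, hf l hl, mul_zero]

theorem HasNonnegSupport.mul : ∀ {n : ℕ} {f g : IterLaurent A n},
    HasNonnegSupport f → HasNonnegSupport g → HasNonnegSupport (f * g)
  | 0, _, _, _, _ => fun _ h => h.elim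
  | _ + 1, _, _, hf, hg => by
    rw [hasNonnegSupport_succ_iff] at *
    refine ⟨fun k hk => coeff_mul_eq_zero_of_nonneg hf.1 hg.1 hk, ?_⟩
    rw [down_mul, coeff_mul_zero_of_nonneg hf.1 hg.1]
    exact hf.2.mul hg.2

theorem HasNonnegSupport.iterCoeff_mul_zero : ∀ {n : ℕ} {f g : IterLaurent A n},
    HasNonnegSupport f → HasNonnegSupport g →
      iterCoeff A (f * g) 0 = iterCoeff A f 0 * iterCoeff A g 0
  | 0, _, _, _, _ => rfl
  | _ + 1, _, _, hf, hg => by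
    rw [hasNonnegSupport_succ_iff] at hf hg
    rw [iterCoeff_succ_zero, down_mul, coeff_mul_zero_of_nonneg hf.1 hg.1,
      hf.2.iterCoeff_mul_zero hg.2]
    rfl

theorem HasNonnegSupport.exists_mul_eq_one : ∀ {n : ℕ} {f : IterLaurent A n},
    HasNonnegSupport f → IsUnit (iterCoeff A f 0) → ∃ g, f * g = 1 ∧ HasNonnegSupport g
  | 0, _, _, hu => ⟨(↑hu.unit⁻¹ : A), hu.mul_val_inv, fun _ h => h.elim⟩
  | _ + 1, f, hf, hu => by
    rw [hasNonnegSupport_succ_iff] at hf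
    obtain ⟨z, hz, hz_supp⟩ := hf.2.exists_mul_eq_one hu
    obtain ⟨y, hy, hy_neg⟩ := exists_mul_eq_one_of_nonneg hf.1 (IsUnit.of_mul_eq_one z hz)
    have hy0 := congrArg (coeff · 0) hy
    simp only [coeff_mul_zero_of_nonneg hf.1 hy_neg, coeff_one, if_pos] at hy0
    have hyz : y.coeff 0 = z := left_inv_eq_right_inv (by rw [mul_comm, hy0]) hz
    exact ⟨up y, down_injective hy, hasNonnegSupport_succ_iff.2 ⟨hy_neg, hyz ▸ hz_supp⟩⟩

theorem coeff_down_truncNeg (f : IterLaurent A (n + 1)) (k : ℤ) :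
    (truncNeg A f).down.coeff k =
      if k < 0 then f.down.coeff k else if k = 0 then truncNeg A (f.down.coeff 0) else 0 :=
  rfl

theorem down_truncNeg (f : IterLaurent A (n + 1)) :
    (truncNeg A f).down = truncLT 0 f.down + single 0 (truncNeg A (f.down.coeff 0)) := by
  ext k
  rw [coeff_add, coeff_down_truncNeg, HahnSeries.coeff_truncLT, coeff_single]
  split_ifs <;> simp_all

theorem truncNeg_add : ∀ {n : ℕ} (f g : IterLaurent A n),
    truncNeg A (f + g) = truncNeg A f + truncNeg A g
  | 0, _, _ => (add_zero 0).symm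
  | _ + 1, f, g => down_injective <| by
    rw [down_add, down_truncNeg, down_truncNeg, down_truncNeg, down_add, coeff_add, truncNeg_add,
      truncLT_add, single_add]
    abel

theorem iterCoeff_truncNeg_zero : ∀ {n : ℕ} (f : IterLaurent A n), iterCoeff A (truncNeg A f) 0 = 0
  | 0, _ => rfl
  | _ + 1, f => by
    rw [iterCoeff_succ_zero, coeff_down_truncNeg, if_neg (lt_irrefl 0), if_pos rfl]
    exact iterCoeff_truncNeg_zero _

theorem HasNonnegSupport.truncNeg_eq_zero : ∀ {n : ℕ} {f : IterLaurent A n},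
    HasNonnegSupport f → truncNeg A f = 0
  | 0, _, _ => rfl
  | _ + 1, f, hf => down_injective <| by
    rw [hasNonnegSupport_succ_iff] at hf
    ext k
    rw [coeff_down_truncNeg]
    split_ifs with hk hk0
    · exact hf.1 k hk
    · exact hf.2.truncNeg_eq_zero
    · rfl

theorem hasNonnegSupport_sub_truncNeg : ∀ {n : ℕ} (f : IterLaurent A n),
    HasNonnegSupport (f - truncNeg A f)
  | 0, _ => fun _ h => h.elim
  | _ + 1, f => hasNonnegSupport_succ_iff.2
    ⟨fun k hk => by rw [down_sub, coeff_sub, coeff_down_truncNeg, if_pos hk, sub_self], by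
      rw [down_sub, coeff_sub, coeff_down_truncNeg, if_neg (lt_irrefl 0), if_pos rfl]
      exact hasNonnegSupport_sub_truncNeg _⟩

theorem isNilpotent_truncNeg : ∀ {n : ℕ} {f : IterLaurent A n},
    IsNilpotent f → IsNilpotent (truncNeg A f)
  | 0, _, _ => IsNilpotent.zero
  | _ + 1, f, hf => by
    have hf' := isNilpotent_down_iff.2 hf
    rw [← isNilpotent_down_iff, down_truncNeg]
    exact (Commute.all _ _).isNilpotent_add
      (isNilpotent_truncLT_zero fun k _ => isNilpotent_coeff_of_isNilpotent hf' k)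
      (isNilpotent_single (isNilpotent_truncNeg (isNilpotent_coeff_of_isNilpotent hf' 0)))

theorem memVplus_one : MemVplus A (1 : IterLaurent A n) :=
  ⟨iterCoeff_one_zero, hasNonnegSupport_one⟩

theorem memVplus_up_C_mul {p' : IterLaurent A n} (hp' : MemVplus A p')
    {p : LaurentSeries (IterLaurent A n)} (hp : ∀ k < 0, p.coeff k = 0) (hp0 : p.coeff 0 = 1) :
    MemVplus A (up (C p' * p)) :=
  ⟨by rw [iterCoeff_succ_zero, down_up, coeff_C_mul, hp0, mul_one]; exact hp'.1,
    hasNonnegSupport_succ_iff.2 ⟨fun k hk => by rw [down_up, coeff_C_mul, hp k hk, mul_zero],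
      by rw [down_up, coeff_C_mul, hp0, mul_one]; exact hp'.2⟩⟩

theorem memVminus_up_C_mul_one_add {m' : IterLaurent A n} (hm' : MemVminus A m')
    {μ : LaurentSeries (IterLaurent A n)} (hμ : ∀ k, 0 ≤ k → μ.coeff k = 0)
    (hμ_nil : IsNilpotent μ) :
    MemVminus A (up (C m' * (1 + μ))) := by
  have hμ0 : (1 + μ).coeff 0 = 1 := by rw [coeff_add, coeff_one, hμ 0 le_rfl, if_pos rfl, add_zero]
  refine ⟨?_, hasNonposSupport_succ_iff.2 ⟨fun k hk => ?_, ?_⟩, ?_⟩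
  · rw [iterCoeff_succ_zero, down_up, coeff_C_mul, hμ0, mul_one]
    exact hm'.1
  · rw [down_up, coeff_C_mul, coeff_add, coeff_one, if_neg hk.ne', hμ k hk.le, add_zero, mul_zero]
  · rw [down_up, coeff_C_mul, hμ0, mul_one]
    exact hm'.2.1
  · rw [← isNilpotent_down_iff, down_sub, down_up, down_one,
      show C m' * (1 + μ) - 1 = C (m' - 1) * (1 + μ) + μ by rw [map_sub, map_one]; ring]
    exact (Commute.all _ _).isNilpotent_add
      ((Commute.all _ _).isNilpotent_mul_right (hm'.2.2.map C)) hμ_nil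

theorem isNilpotent_iterCoeff_iterC_mul_mul_sub (a : A) {p m : IterLaurent A n}
    (hp : MemVplus A p) (hm : IsNilpotent (m - 1)) :
    IsNilpotent (iterCoeff A (iterC A n a * p * m) 0 - a) := by
  rw [show iterC A n a * p * m = iterC A n a * p + iterC A n a * p * (m - 1) by ring, iterCoeff_add,
    iterCoeff_iterC_mul, hp.1, mul_one, add_sub_cancel_left]
  exact isNilpotent_iterCoeff ((Commute.all _ _).isNilpotent_mul_left hm) 0

theorem isNilpotent_truncNeg_iterC_mul_mul (a : A) {p m : IterLaurent A n}
    (hp : MemVplus A p) (hm : IsNilpotent (m - 1)) :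
    IsNilpotent (truncNeg A (iterC A n a * p * m)) := by
  rw [show iterC A n a * p * m = iterC A n a * p + iterC A n a * p * (m - 1) by ring, truncNeg_add,
    (HasNonnegSupport.iterC_mul hp.2 a).truncNeg_eq_zero, zero_add]
  exact isNilpotent_truncNeg ((Commute.all _ _).isNilpotent_mul_left hm)

variable {f g : IterLaurent A n}

theorem MemZeroMul.of_isNilpotent_sub (hf : MemZeroMul A f) (h : IsNilpotent (g - f)) :
    MemZeroMul A g :=
  ⟨hf.1.of_isNilpotent_sub (iterCoeff_sub g f 0 ▸ isNilpotent_iterCoeff h 0), by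
    rw [← sub_add_cancel g f, truncNeg_add]
    exact (Commute.all _ _).isNilpotent_add (isNilpotent_truncNeg h) hf.2⟩

theorem memZeroMul_of_hasNonnegSupport (hf : HasNonnegSupport f) (hu : IsUnit (iterCoeff A f 0)) :
    MemZeroMul A f :=
  ⟨hu, hf.truncNeg_eq_zero ▸ IsNilpotent.zero⟩

theorem iterCoeff_sub_truncNeg_zero (f : IterLaurent A n) :
    iterCoeff A (f - truncNeg A f) 0 = iterCoeff A f 0 := by
  rw [iterCoeff_sub, iterCoeff_truncNeg_zero, sub_zero]

theorem MemZeroMul.exists_mul_eq_one (hf : MemZeroMul A f) :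
    ∃ g, f * g = 1 ∧ MemZeroMul A g := by
  -- with `s = f - f₋` and `s * y = 1`, `f = s * (1 + y * f₋)` has inverse `y * (1 + y * f₋)⁻¹`
  have hs := hasNonnegSupport_sub_truncNeg f
  obtain ⟨y, hsy, hy⟩ := hs.exists_mul_eq_one ((iterCoeff_sub_truncNeg_zero f).symm ▸ hf.1)
  have hyu : IsUnit (iterCoeff A y 0) :=
    IsUnit.of_mul_eq_one (iterCoeff A (f - truncNeg A f) 0)
      (by rw [mul_comm, ← hs.iterCoeff_mul_zero hy, hsy, iterCoeff_one_zero])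
  have hν : IsNilpotent (y * truncNeg A f) := (Commute.all _ _).isNilpotent_mul_left hf.2
  obtain ⟨v, hv⟩ := hν.isUnit_one_add.exists_right_inv
  refine ⟨y * v, by linear_combination v * hsy + hv,
    (memZeroMul_of_hasNonnegSupport hy hyu).of_isNilpotent_sub ?_⟩
  rw [show y * v - y = -(y * v * (y * truncNeg A f)) by linear_combination y * hv]
  exact ((Commute.all _ _).isNilpotent_mul_left hν).neg

theorem MemZeroMul.isUnit (hf : MemZeroMul A f) : IsUnit f :=
  let ⟨g, hfg, _⟩ := hf.exists_mul_eq_one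
  IsUnit.of_mul_eq_one g hfg

theorem MemZeroMul.of_mul_eq_one (hf : MemZeroMul A f) (hfg : f * g = 1) : MemZeroMul A g := by
  obtain ⟨g', hfg', hg'⟩ := hf.exists_mul_eq_one
  rwa [left_inv_eq_right_inv (show g * f = 1 by rw [mul_comm, hfg]) hfg']

theorem isNilpotent_mul_sub_mul_sub_truncNeg (hf : IsNilpotent (truncNeg A f))
    (hg : IsNilpotent (truncNeg A g)) :
    IsNilpotent (f * g - (f - truncNeg A f) * (g - truncNeg A g)) := by
  rw [show f * g - (f - truncNeg A f) * (g - truncNeg A g) =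
    truncNeg A f * g + (f - truncNeg A f) * truncNeg A g by ring]
  exact (Commute.all _ _).isNilpotent_add ((Commute.all _ _).isNilpotent_mul_right hf)
    ((Commute.all _ _).isNilpotent_mul_left hg)

theorem isNilpotent_iterCoeff_mul_sub (hf : IsNilpotent (truncNeg A f))
    (hg : IsNilpotent (truncNeg A g)) :
    IsNilpotent (iterCoeff A (f * g) 0 - iterCoeff A f 0 * iterCoeff A g 0) := by
  rw [← iterCoeff_sub_truncNeg_zero f, ← iterCoeff_sub_truncNeg_zero g,
    ← (hasNonnegSupport_sub_truncNeg f).iterCoeff_mul_zero (hasNonnegSupport_sub_truncNeg g),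
    ← iterCoeff_sub]
  exact isNilpotent_iterCoeff (isNilpotent_mul_sub_mul_sub_truncNeg hf hg) 0

theorem MemZeroMul.mul (hf : MemZeroMul A f) (hg : MemZeroMul A g) : MemZeroMul A (f * g) := by
  refine ⟨(hf.1.mul hg.1).of_isNilpotent_sub (isNilpotent_iterCoeff_mul_sub hf.2 hg.2), ?_⟩
  rw [← sub_add_cancel (f * g) ((f - truncNeg A f) * (g - truncNeg A g)), truncNeg_add,
    ((hasNonnegSupport_sub_truncNeg f).mul (hasNonnegSupport_sub_truncNeg g)).truncNeg_eq_zero,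
    add_zero]
  exact isNilpotent_truncNeg (isNilpotent_mul_sub_mul_sub_truncNeg hf.2 hg.2)

theorem MemZeroMul.down_coeff_zero {f : IterLaurent A (n + 1)} (hf : MemZeroMul A f) :
    MemZeroMul A (f.down.coeff 0) :=
  ⟨hf.1, by simpa [coeff_down_truncNeg] using
    isNilpotent_coeff_of_isNilpotent (isNilpotent_down_iff.2 hf.2) 0⟩

theorem MemZeroMul.isNilpotent_down_coeff {f : IterLaurent A (n + 1)} (hf : MemZeroMul A f)
    {k : ℤ} (hk : k < 0) : IsNilpotent (f.down.coeff k) := by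
  simpa [coeff_down_truncNeg, hk] using
    isNilpotent_coeff_of_isNilpotent (isNilpotent_down_iff.2 hf.2) k

theorem MemZeroMul.exists_factor : ∀ {n : ℕ} {f : IterLaurent A n}, MemZeroMul A f →
    ∃ (a : A) (p m : IterLaurent A n), MemVplus A p ∧ MemVminus A m ∧ f = iterC A n a * p * m
  | 0, f, _ => ⟨f, 1, 1, memVplus_one, ⟨rfl, fun _ h => h.elim, by rw [sub_self]; exact .zero⟩,
      by rw [mul_one, mul_one]; rfl⟩
  | _ + 1, f, hf => by
    obtain ⟨b, p, μ, hb, hp, hp0, hμ, hμ_nil, hf_eq⟩ :=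
      exists_C_mul_mul_one_add hf.down_coeff_zero.isUnit fun k hk => hf.isNilpotent_down_coeff hk
    obtain ⟨a, p', m', hp', hm', rfl⟩ :=
      MemZeroMul.exists_factor (hf.down_coeff_zero.of_isNilpotent_sub hb)
    refine ⟨a, up (C p' * p), up (C m' * (1 + μ)), memVplus_up_C_mul hp' hp hp0,
      memVminus_up_C_mul_one_add hm' hμ hμ_nil, down_injective ?_⟩
    rw [hf_eq, down_mul, down_mul, down_iterC, down_up, down_up, map_mul, map_mul]
    ring

theorem memZeroMul_one : MemZeroMul A (1 : IterLaurent A n) :=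
  memZeroMul_of_hasNonnegSupport hasNonnegSupport_one (iterCoeff_one_zero (A := A) ▸ isUnit_one)

theorem memZeroMul_iterC_mul_mul {a : A} (ha : IsUnit a) {p m : IterLaurent A n}
    (hp : MemVplus A p) (hm : IsNilpotent (m - 1)) : MemZeroMul A (iterC A n a * p * m) :=
  ⟨ha.of_isNilpotent_sub (isNilpotent_iterCoeff_iterC_mul_mul_sub a hp hm),
    isNilpotent_truncNeg_iterC_mul_mul a hp hm⟩

theorem memZeroMul_iff_exists (f : IterLaurent A n) :
    MemZeroMul A f ↔ ∃ (a : Aˣ) (p m : IterLaurent A n), MemVplus A p ∧ MemVminus A m ∧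
      f = iterC A n (a : A) * p * m := by
  refine ⟨fun hf => ?_, fun ⟨a, p, m, hp, hm, hf⟩ =>
    hf ▸ memZeroMul_iterC_mul_mul a.isUnit hp hm.2.2⟩
  obtain ⟨a, p, m, hp, hm, rfl⟩ := hf.exists_factor
  have ha : IsUnit a := hf.1.of_isNilpotent_sub
    (isNilpotent_sub_comm.1 (isNilpotent_iterCoeff_iterC_mul_mul_sub a hp hm.2.2))
  exact ⟨ha.unit, p, m, hp, hm, rfl⟩

theorem MemSharpMul.memZeroMul (hf : MemSharpMul A f) : MemZeroMul A f :=
  ⟨isUnit_one.of_isNilpotent_sub hf.1, hf.2⟩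

theorem memSharpMul_iff_exists (f : IterLaurent A n) :
    MemSharpMul A f ↔ ∃ (a : A) (p m : IterLaurent A n), IsNilpotent a ∧ MemVplus A p ∧
      MemVminus A m ∧ f = iterC A n (1 + a) * p * m := by
  constructor
  · intro hf
    obtain ⟨a, p, m, hp, hm, rfl⟩ := hf.memZeroMul.exists_factor
    have ha := isNilpotent_iterCoeff_iterC_mul_mul_sub a hp hm.2.2
    refine ⟨a - 1, p, m, ?_, hp, hm, by rw [add_sub_cancel]⟩
    rw [isNilpotent_sub_iff_mk_eq] at ha ⊢
    rw [← ha, ← isNilpotent_sub_iff_mk_eq]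
    exact hf.1
  · rintro ⟨a, p, m, ha, hp, hm, rfl⟩
    have h := isNilpotent_iterCoeff_iterC_mul_mul_sub (1 + a) hp hm.2.2
    refine ⟨?_, isNilpotent_truncNeg_iterC_mul_mul _ hp hm.2.2⟩
    rw [isNilpotent_sub_iff_mk_eq] at h ⊢
    rw [h, map_add, Ideal.Quotient.eq_zero_iff_mem.2 (mem_nilradical.2 ha), add_zero]

theorem MemSharpMul.mul (hf : MemSharpMul A f) (hg : MemSharpMul A g) : MemSharpMul A (f * g) := by
  refine ⟨?_, (hf.memZeroMul.mul hg.memZeroMul).2⟩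
  rw [isNilpotent_sub_iff_mk_eq,
    isNilpotent_sub_iff_mk_eq.1 (isNilpotent_iterCoeff_mul_sub hf.2 hg.2), map_mul,
    isNilpotent_sub_iff_mk_eq.1 hf.1, isNilpotent_sub_iff_mk_eq.1 hg.1, map_one, mul_one]

theorem MemSharpMul.of_mul_eq_one (hf : MemSharpMul A f) (hfg : f * g = 1) : MemSharpMul A g := by
  have hg := hf.memZeroMul.of_mul_eq_one hfg
  have h := isNilpotent_sub_iff_mk_eq.1 (isNilpotent_iterCoeff_mul_sub hf.2 hg.2)
  rw [hfg, iterCoeff_one_zero, map_mul, isNilpotent_sub_iff_mk_eq.1 hf.1, map_one, one_mul] at h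
  exact ⟨isNilpotent_sub_iff_mk_eq.2 (by rw [map_one, h]), hg.2⟩

def zeroMulUnits (A : Type) [CommRing A] (n : ℕ) : Subgroup (IterLaurent A n)ˣ where
  carrier := {u | MemZeroMul A (u : IterLaurent A n)}
  mul_mem' hu hv := MemZeroMul.mul hu hv
  one_mem' := memZeroMul_one
  inv_mem' {u} hu := MemZeroMul.of_mul_eq_one hu u.mul_inv

def sharpMulUnits (A : Type) [CommRing A] (n : ℕ) : Subgroup (IterLaurent A n)ˣ where
  carrier := {u | MemSharpMul A (u : IterLaurent A n)}
  mul_mem' hu hv := MemSharpMul.mul hu hv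
  one_mem' := ⟨by rw [Units.val_one, iterCoeff_one_zero, sub_self]; exact .zero, memZeroMul_one.2⟩
  inv_mem' {u} hu := MemSharpMul.of_mul_eq_one hu u.mul_inv

end IterLaurent

theorem statement5_general (n : ℕ) (A : Type) [CommRing A] :
    (∀ f : IterLaurent A n,
      (∃ (a : Aˣ) (p m : IterLaurent A n), MemVplus A p ∧ MemVminus A m ∧
          f = iterC A n (a : A) * p * m) ↔
        (IsUnit (iterCoeff A f 0) ∧ IsNilpotent (truncNeg A f))) ∧
    (∀ f : IterLaurent A n,
      (∃ (a : A) (p m : IterLaurent A n), IsNilpotent a ∧ MemVplus A p ∧ MemVminus A m ∧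
          f = iterC A n (1 + a) * p * m) ↔
        (IsNilpotent (iterCoeff A f 0 - 1) ∧ IsNilpotent (truncNeg A f))) ∧
    (∀ f : IterLaurent A n,
      IsUnit (iterCoeff A f 0) ∧ IsNilpotent (truncNeg A f) → IsUnit f) ∧
    (∃ H : Subgroup (IterLaurent A n)ˣ, ∀ u : (IterLaurent A n)ˣ,
      u ∈ H ↔ (IsUnit (iterCoeff A (u : IterLaurent A n) 0) ∧
        IsNilpotent (truncNeg A (u : IterLaurent A n)))) ∧
    (∃ H : Subgroup (IterLaurent A n)ˣ, ∀ u : (IterLaurent A n)ˣ,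
      u ∈ H ↔ (IsNilpotent (iterCoeff A (u : IterLaurent A n) 0 - 1) ∧
        IsNilpotent (truncNeg A (u : IterLaurent A n)))) :=
  ⟨fun f => (memZeroMul_iff_exists f).symm, fun f => (memSharpMul_iff_exists f).symm,
    fun _ hf => MemZeroMul.isUnit hf, ⟨zeroMulUnits A n, fun _ => Iff.rfl⟩,
    ⟨sharpMulUnits A n, fun _ => Iff.rfl⟩⟩

/-- For `n ≥ 1` and any commutative ring `A`:
(a) `Aˣ·V₊(A)·V₋(A) = {f : coeff₀(f) ∈ Aˣ and f₋ nilpotent}`;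
(b) `(1+Nil(A))·V₊(A)·V₋(A) = {f : coeff₀(f) − 1 nilpotent and f₋ nilpotent}`;
and both sets consist of units and are subgroups of `Lⁿ(A)ˣ`. -/
theorem statement5 (n : ℕ) (hn : 1 ≤ n) (A : Type) [CommRing A] :
    (∀ f : IterLaurent A n,
      (∃ (a : Aˣ) (p m : IterLaurent A n), MemVplus A p ∧ MemVminus A m ∧
          f = iterC A n (a : A) * p * m) ↔
        (IsUnit (iterCoeff A f 0) ∧ IsNilpotent (truncNeg A f))) ∧
    (∀ f : IterLaurent A n,
      (∃ (a : A) (p m : IterLaurent A n), IsNilpotent a ∧ MemVplus A p ∧ MemVminus A m ∧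
          f = iterC A n (1 + a) * p * m) ↔
        (IsNilpotent (iterCoeff A f 0 - 1) ∧ IsNilpotent (truncNeg A f))) ∧
    (∀ f : IterLaurent A n,
      IsUnit (iterCoeff A f 0) ∧ IsNilpotent (truncNeg A f) → IsUnit f) ∧
    (∃ H : Subgroup (IterLaurent A n)ˣ, ∀ u : (IterLaurent A n)ˣ,
      u ∈ H ↔ (IsUnit (iterCoeff A (u : IterLaurent A n) 0) ∧
        IsNilpotent (truncNeg A (u : IterLaurent A n)))) ∧
    (∃ H : Subgroup (IterLaurent A n)ˣ, ∀ u : (IterLaurent A n)ˣ,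
      u ∈ H ↔ (IsNilpotent (iterCoeff A (u : IterLaurent A n) 0 - 1) ∧
        IsNilpotent (truncNeg A (u : IterLaurent A n)))) :=
  statement5_general n A
end
end

section
/- Let n ≥ 1. There exists exactly one map sgn : (ℤⁿ)^{n+1} → ℤ/2ℤ that is additive in each argument, symmetric, and satisfies sgn(l, l, r₁, …, r_{n−1}) ≡ det(l, r₁, …, r_{n−1}) (mod 2) for all l, r₁, …, r_{n−1} ∈ ℤⁿ, where det(v₁,…,vₙ) denotes the determinant of the integer n×n matrix with columns v₁,…,vₙ. Moreover this map is given by the formula sgn(l₁,…,l_{n+1}) ≡ Σ_{1≤i<j≤n+1} det(l₁, …, l̂ᵢ, …, l̂ⱼ, …, l_{n+1}, lᵢ*lⱼ) (mod 2), where a hat means the corresponding entry is omitted and lᵢ*lⱼ ∈ ℤⁿ is the coordinate-wise product of lᵢ and lⱼ. -/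
/-! ### The sign map of Vostokov–Fesenko–Parshin -/

/-- The explicit formula (Vostokov–Fesenko) for the sign map
`sgn : (ℤⁿ)^{n+1} → ℤ/2ℤ` (here `n = m+1`):
`sgn(l₁,…,l_{n+1}) = Σ_{i<j} det(l₁,…,l̂ᵢ,…,l̂ⱼ,…,l_{n+1}, lᵢ*lⱼ) mod 2`,
where `lᵢ*lⱼ` is the coordinatewise product. -/
def sgnFormula (m : ℕ) (v : Fin (m+2) → (Fin (m+1) → ℤ)) : ZMod 2 :=
  ∑ i : Fin (m+2), ∑ j : Fin (m+2),
    if hij : i < j then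
      ((Matrix.det (Matrix.of fun r c : Fin (m+1) =>
        (Fin.snoc
          (fun k : Fin m =>
            v (j.succAbove ((i.castPred (hij.trans_le (Fin.le_last j)).ne).succAbove k)))
          (fun t => v i t * v j t) : Fin (m+1) → Fin (m+1) → ℤ) c r) : ℤ) : ZMod 2)
    else 0

/-- The defining conditions for the sign map: multilinearity (additivity in each
argument), symmetry, and the diagonal condition
`sgn(l,l,r₁,…,r_{n−1}) ≡ det(l,r₁,…,r_{n−1}) (mod 2)`. -/
def SgnConds (m : ℕ) (s : (Fin (m+2) → (Fin (m+1) → ℤ)) → ZMod 2) : Prop :=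
  (∀ (v : Fin (m+2) → (Fin (m+1) → ℤ)) (k : Fin (m+2)) (x y : Fin (m+1) → ℤ),
    s (Function.update v k (x + y)) = s (Function.update v k x) + s (Function.update v k y)) ∧
  (∀ (v : Fin (m+2) → (Fin (m+1) → ℤ)) (σ : Equiv.Perm (Fin (m+2))), s (v ∘ σ) = s v) ∧
  (∀ (x : Fin (m+1) → ℤ) (r : Fin m → (Fin (m+1) → ℤ)),
    s (Fin.cons x (Fin.cons x r)) =
      ((Matrix.det (Matrix.of fun a b : Fin (m+1) =>
        (Fin.cons x r : Fin (m+1) → Fin (m+1) → ℤ) b a) : ℤ) : ZMod 2))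

/-!
Both the conditions and the formula are additive in each argument, so everything is decided on
tuples `(e_{f 1}, …, e_{f (n+1)})` of standard basis vectors. Among `n+1` vectors taken from `n`
basis vectors two coincide, so symmetry and the diagonal condition fix the value of any solution
on such a tuple: this is uniqueness. On the formula side, the `(i, j)` term on a basis tuple is `1`
exactly when `f i = f j` and `f` is onto, and a surjection `Fin (n+1) → Fin n` has exactly one
colliding pair `i < j`; hence the formula takes the value `[f surjective]`, which is symmetric and
agrees with the determinant on diagonal tuples. The diagonal condition may itself be checked on
basis tuples because in characteristic `2` the diagonal `l ↦ sgn(l, l, …)` of a symmetric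
bi-additive map is additive.
-/

open Function

section MultiAdditive

variable {ι V M : Type*} [DecidableEq ι]

def IsMultiAdditive [Add V] [Add M] (s : (ι → V) → M) : Prop :=
  ∀ (v : ι → V) (k : ι) (x y : V),
    s (update v k (x + y)) = s (update v k x) + s (update v k y)

theorem isMultiAdditive_sum {α : Type*} [Add V] [AddCommMonoid M] (S : Finset α)
    {t : α → (ι → V) → M} (ht : ∀ a ∈ S, IsMultiAdditive (t a)) :
    IsMultiAdditive fun v => ∑ a ∈ S, t a v := by
  intro v k x y
  simp only [← Finset.sum_add_distrib]
  exact Finset.sum_congr rfl fun a ha => ht a ha v k x y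

theorem IsMultiAdditive.comp_perm [Add V] [Add M] {s : (ι → V) → M} (hs : IsMultiAdditive s)
    (σ : Equiv.Perm ι) : IsMultiAdditive fun v => s (v ∘ σ) := by
  intro v k x y
  simp only [update_comp_equiv]
  exact hs _ _ x y

theorem IsMultiAdditive.map {N : Type*} [Add V] [AddZeroClass M] [AddZeroClass N]
    {s : (ι → V) → M} (hs : IsMultiAdditive s) (φ : M →+ N) :
    IsMultiAdditive fun v => φ (s v) :=
  fun v k x y => by simp only [hs v k x y, map_add]

def IsMultiAdditive.toMultilinearMap [AddCommGroup V] [AddCommGroup M] {s : (ι → V) → M}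
    (hs : IsMultiAdditive s) : MultilinearMap ℤ (fun _ : ι => V) M where
  toFun := s
  map_update_add' := by
    intro _ v k x y
    convert hs v k x y
  map_update_smul' := by
    intro _ v k c x
    exact map_zsmul (AddMonoidHom.mk' (fun x => s (update v k x)) (by convert hs v k)) c x

theorem IsMultiAdditive.ext_single [Finite ι] {κ : Type*} [Finite κ] [DecidableEq κ]
    [AddCommGroup M] {s t : (ι → κ → ℤ) → M}
    (hs : IsMultiAdditive s) (ht : IsMultiAdditive t)
    (h : ∀ f : ι → κ, s (fun i => Pi.single (f i) 1) = t (fun i => Pi.single (f i) 1)) :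
    s = t := by
  have := Module.Basis.ext_multilinear (f := hs.toMultilinearMap) (g := ht.toMultilinearMap)
    (fun _ => Pi.basisFun ℤ κ) (by simp only [Pi.basisFun_apply]; exact h)
  exact congrArg DFunLike.coe this

end MultiAdditive

theorem isMultiAdditive_det {n R : Type*} [Fintype n] [DecidableEq n] [CommRing R] :
    IsMultiAdditive fun w : n → n → R => (Matrix.of w).det :=
  fun w k x y => Matrix.det_updateRow_add (Matrix.of w) k x y

theorem diag_add_of_symm {V R : Type*} [Add V] [CommRing R] [CharP R 2]
    (B : V → V → R) (hl : ∀ x x' y, B (x + x') y = B x y + B x' y)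
    (hsymm : ∀ x y, B x y = B y x) (x y : V) :
    B (x + y) (x + y) = B x x + B y y := by
  have hr : ∀ x y y', B x (y + y') = B x y + B x y' := fun x y y' => by
    rw [hsymm, hl, hsymm y, hsymm y']
  rw [hl, hr, hr, hsymm y x]
  linear_combination CharTwo.add_self_eq_zero (B x y)

theorem Fin.cons_cons_comp_swap_zero_one {n : ℕ} {α : Type*} (x y : α) (r : Fin n → α) :
    (Fin.cons x (Fin.cons y r) : Fin (n+2) → α) ∘ Equiv.swap 0 1 =
      Fin.cons y (Fin.cons x r) := by
  funext a
  refine Fin.cases ?_ (fun b => Fin.cases ?_ (fun c => ?_) b) a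
  · simp
  · simp
  · have hc : c.succ.succ ≠ 1 := by
      rw [← Fin.succ_zero_eq_one]; exact (Fin.succ_injective _).ne (Fin.succ_ne_zero c)
    simp [Equiv.swap_apply_of_ne_of_ne (Fin.succ_ne_zero _) hc]

theorem IsMultiAdditive.comp_cons_head {n : ℕ} {V R : Type*} [Add V] [CommRing R] [CharP R 2]
    {s : (Fin (n+2) → V) → R} (hs : IsMultiAdditive s)
    (hsymm : ∀ v (σ : Equiv.Perm (Fin (n+2))), s (v ∘ σ) = s v) :
    IsMultiAdditive fun w : Fin (n+1) → V => s (Fin.cons (w 0) w) := by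
  intro w k x y
  induction k using Fin.cases with
  | zero =>
    have hw : ∀ z, update w 0 z = Fin.cons z (Fin.tail w) := fun z => by
      rw [← Fin.update_cons_zero (x := w 0), Fin.cons_self_tail]
    simp only [hw, Fin.cons_zero]
    refine diag_add_of_symm (fun a b => s (Fin.cons a (Fin.cons b (Fin.tail w))))
      (fun a a' b => ?_) (fun a b => ?_) x y
    · have h0 : ∀ z, (Fin.cons z (Fin.cons b (Fin.tail w)) : Fin (n+2) → V) =
          update (Fin.cons x (Fin.cons b (Fin.tail w))) 0 z := fun z =>
        (Fin.update_cons_zero ..).symm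
      rw [h0 (a + a'), h0 a, h0 a']
      exact hs _ _ _ _
    · rw [← hsymm _ (Equiv.swap 0 1), Fin.cons_cons_comp_swap_zero_one]
  | succ l =>
    simp only [update_of_ne (Fin.succ_ne_zero l).symm, Fin.cons_update]
    exact hs _ _ _ _

theorem det_of_single_cast_zmod_two {n : Type*} [Fintype n] [DecidableEq n] (h : n → n) :
    ((Matrix.of fun c => (Pi.single (h c) 1 : n → ℤ)).det : ZMod 2) =
      if Bijective h then 1 else 0 := by
  split_ifs with hb
  · have : Matrix.of (fun c => (Pi.single (h c) 1 : n → ℤ)) =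
        Equiv.Perm.permMatrix ℤ (Equiv.ofBijective h hb) := by
      ext a b
      simp [Equiv.Perm.permMatrix, PEquiv.toMatrix_apply, Pi.single_apply, eq_comm]
    rw [this, Matrix.det_permutation]
    rcases Int.units_eq_one_or (Equiv.Perm.sign (Equiv.ofBijective h hb)) with h1 | h1 <;>
      simp [h1]
  · obtain ⟨a, b, hab, hne⟩ := Function.not_injective_iff.mp
      (mt Finite.injective_iff_bijective.mp hb)
    rw [Matrix.det_zero_of_row_eq hne (congrArg (fun c => Pi.single c (1 : ℤ)) hab),
      Int.cast_zero]

section PairRows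

variable {m : ℕ} {i j : Fin (m+2)}

/-- For `i < j`, this enumerates the indices other than `i` and `j`. -/
def skipTwo (i j : Fin (m+2)) (hi : i ≠ Fin.last (m+1)) (k : Fin m) : Fin (m+2) :=
  j.succAbove ((i.castPred hi).succAbove k)

theorem skipTwo_ne_left (hij : i < j) (hi : i ≠ Fin.last (m+1)) (k : Fin m) :
    skipTwo i j hi k ≠ i := by
  intro h
  apply Fin.succAbove_ne (i.castPred hi) k
  apply Fin.succAbove_right_injective (p := j)
  rw [skipTwo] at h
  rw [h, Fin.succAbove_castPred_of_lt j i hij]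

theorem skipTwo_ne_right (hi : i ≠ Fin.last (m+1)) (k : Fin m) : skipTwo i j hi k ≠ j :=
  Fin.succAbove_ne _ _

theorem skipTwo_injective (hi : i ≠ Fin.last (m+1)) : Injective (skipTwo i j hi) :=
  Fin.succAbove_right_injective.comp Fin.succAbove_right_injective

theorem exists_skipTwo_eq (hij : i < j) (hi : i ≠ Fin.last (m+1)) {k : Fin (m+2)}
    (hki : k ≠ i) (hkj : k ≠ j) : ∃ l, skipTwo i j hi l = k := by
  obtain ⟨c, rfl⟩ := Fin.exists_succAbove_eq hkj
  have hc : c ≠ i.castPred hi := by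
    rintro rfl
    exact hki (Fin.succAbove_castPred_of_lt j i hij)
  obtain ⟨l, rfl⟩ := Fin.exists_succAbove_eq hc
  exact ⟨l, rfl⟩

/-- The rows `l₁, …, l̂ᵢ, …, l̂ⱼ, …, l_{n+1}, lᵢ * lⱼ` of the `(i, j)` term of
`sgnFormula`. -/
def pairRows {R : Type*} [Mul R] (v : Fin (m+2) → R) (i j : Fin (m+2))
    (hi : i ≠ Fin.last (m+1)) : Fin (m+1) → R :=
  Fin.snoc (v ∘ skipTwo i j hi) (v i * v j)

theorem sgnFormula_eq_sum_det_pairRows (v : Fin (m+2) → Fin (m+1) → ℤ) :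
    sgnFormula m v = ∑ i, ∑ j, if hij : i < j then
      (((Matrix.of (pairRows v i j (hij.trans_le (Fin.le_last j)).ne)).det : ℤ) : ZMod 2)
      else 0 := by
  refine Finset.sum_congr rfl fun i _ => Finset.sum_congr rfl fun j _ => ?_
  split_ifs
  · rw [← Matrix.det_transpose]
    rfl
  · rfl

theorem exists_pairRows_update {R : Type*} [NonUnitalNonAssocSemiring R] (hij : i < j)
    (hi : i ≠ Fin.last (m+1)) (v : Fin (m+2) → R) (k : Fin (m+2)) :
    ∃ (c : Fin (m+1)) (φ : R →+ R),
      ∀ z, pairRows (update v k z) i j hi = update (pairRows v i j hi) c (φ z) := by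
  rcases eq_or_ne k i with rfl | hki
  · refine ⟨Fin.last m, AddMonoidHom.mulRight (v j), fun z => ?_⟩
    rw [pairRows, pairRows, Fin.update_snoc_last, update_self, update_of_ne hij.ne',
      update_comp_eq_of_forall_ne _ _ (skipTwo_ne_left hij hi)]
    rfl
  rcases eq_or_ne k j with rfl | hkj
  · refine ⟨Fin.last m, AddMonoidHom.mulLeft (v i), fun z => ?_⟩
    rw [pairRows, pairRows, Fin.update_snoc_last, update_self, update_of_ne hij.ne,
      update_comp_eq_of_forall_ne _ _ (skipTwo_ne_right hi)]
    rfl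
  obtain ⟨l, rfl⟩ := exists_skipTwo_eq hij hi hki hkj
  refine ⟨l.castSucc, AddMonoidHom.id R, fun z => ?_⟩
  rw [pairRows, pairRows, update_comp_eq_of_injective _ (skipTwo_injective hi),
    update_of_ne hki.symm, update_of_ne hkj.symm, Fin.snoc_update]
  rfl

theorem isMultiAdditive_det_pairRows {R : Type*} [CommRing R] (hij : i < j)
    (hi : i ≠ Fin.last (m+1)) :
    IsMultiAdditive fun v : Fin (m+2) → Fin (m+1) → R =>
      (Matrix.of (pairRows v i j hi)).det := by
  intro v k x y
  obtain ⟨c, φ, hφ⟩ := exists_pairRows_update hij hi v k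
  simp only [hφ, map_add]
  exact isMultiAdditive_det _ c _ _

end PairRows

theorem isMultiAdditive_sgnFormula (m : ℕ) : IsMultiAdditive (sgnFormula m) := by
  simp only [funext sgnFormula_eq_sum_det_pairRows]
  refine isMultiAdditive_sum _ fun i _ => isMultiAdditive_sum _ fun j _ => ?_
  by_cases hij : i < j
  · simp only [dif_pos hij]
    exact (isMultiAdditive_det_pairRows hij _).map (Int.castAddHom (ZMod 2))
  · simp only [dif_neg hij]
    exact fun _ _ _ _ => (add_zero 0).symm

theorem surjective_comp_snoc_skipTwo_iff {m : ℕ} {β : Type*} {f : Fin (m+2) → β}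
    {i j : Fin (m+2)} (hij : i < j) (hi : i ≠ Fin.last (m+1)) (hf : f i = f j) :
    Surjective (f ∘ Fin.snoc (skipTwo i j hi) i) ↔ Surjective f := by
  refine ⟨Surjective.of_comp, fun hsurj y => ?_⟩
  obtain ⟨a, rfl⟩ := hsurj y
  by_cases ha : a = i ∨ a = j
  · refine ⟨Fin.last m, ?_⟩
    rcases ha with rfl | rfl <;> simp [hf]
  · push Not at ha
    obtain ⟨l, rfl⟩ := exists_skipTwo_eq hij hi ha.1 ha.2
    exact ⟨l.castSucc, by simp⟩

theorem det_pairRows_single {m : ℕ} {i j : Fin (m+2)} (hij : i < j)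
    (hi : i ≠ Fin.last (m+1)) (f : Fin (m+2) → Fin (m+1)) :
    (((Matrix.of (pairRows (fun a => Pi.single (f a) (1 : ℤ)) i j hi)).det : ℤ) : ZMod 2) =
      if f i = f j ∧ Surjective f then 1 else 0 := by
  by_cases hf : f i = f j
  · have hrows : pairRows (fun a => (Pi.single (f a) 1 : Fin (m+1) → ℤ)) i j hi =
        fun c => Pi.single ((f ∘ Fin.snoc (skipTwo i j hi) i) c) 1 := by
      funext c
      cases c using Fin.lastCases <;> simp [pairRows, ← hf, ← Pi.single_mul]
    rw [hrows, det_of_single_cast_zmod_two]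
    simp only [← Finite.surjective_iff_bijective, surjective_comp_snoc_skipTwo_iff hij hi hf, hf,
      true_and]
  · rw [Matrix.det_eq_zero_of_row_eq_zero (Fin.last m) fun c => ?_, if_neg fun h => hf h.1,
      Int.cast_zero]
    simp only [pairRows, Matrix.of_apply, Fin.snoc_last, Pi.mul_apply, Pi.single_apply]
    split_ifs <;> simp_all

theorem eq_of_apply_eq_of_surjective {n : ℕ} {f : Fin (n+1) → Fin n} (hf : Surjective f)
    {a b c d : Fin (n+1)} (hab : a ≠ b) (h : f a = f b) (hcb : c ≠ b) (hdb : d ≠ b)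
    (hcd : f c = f d) : c = d := by
  have hsurj : Surjective (f ∘ b.succAbove) := fun y => by
    obtain ⟨x, rfl⟩ := hf y
    by_cases hx : x = b
    · obtain ⟨a', rfl⟩ := Fin.exists_succAbove_eq hab
      exact ⟨a', by simp [h, hx]⟩
    · obtain ⟨x', rfl⟩ := Fin.exists_succAbove_eq hx
      exact ⟨x', rfl⟩
  obtain ⟨c', rfl⟩ := Fin.exists_succAbove_eq hcb
  obtain ⟨d', rfl⟩ := Fin.exists_succAbove_eq hdb
  rw [Finite.injective_iff_surjective.mpr hsurj hcd]

theorem existsUnique_lt_apply_eq_of_surjective {n : ℕ} {f : Fin (n+1) → Fin n}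
    (hf : Surjective f) : ∃! p : Fin (n+1) × Fin (n+1), p.1 < p.2 ∧ f p.1 = f p.2 := by
  obtain ⟨a, b, hab, h⟩ : ∃ a b, a < b ∧ f a = f b := by
    obtain ⟨a, b, hne, h⟩ := Fintype.exists_ne_map_eq_of_card_lt f (by simp)
    rcases hne.lt_or_gt with hlt | hlt
    exacts [⟨a, b, hlt, h⟩, ⟨b, a, hlt, h.symm⟩]
  refine ⟨(a, b), ⟨hab, h⟩, ?_⟩
  rintro ⟨c, d⟩ ⟨hcd : c < d, hfcd : f c = f d⟩
  have hb : c = b ∨ d = b := by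
    by_contra! hne
    exact hcd.ne (eq_of_apply_eq_of_surjective hf hab.ne h hne.1 hne.2 hfcd)
  have ha : c = a ∨ d = a := by
    by_contra! hne
    exact hcd.ne (eq_of_apply_eq_of_surjective hf hab.ne' h.symm hne.1 hne.2 hfcd)
  simp only [Prod.mk.injEq]
  omega

theorem sgnFormula_single (m : ℕ) (f : Fin (m+2) → Fin (m+1)) :
    sgnFormula m (fun a => Pi.single (f a) 1) = if Surjective f then 1 else 0 := by
  have hterm : ∀ i j : Fin (m+2),
      (if hij : i < j then (((Matrix.of (pairRows (fun a => Pi.single (f a) (1 : ℤ)) i j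
        (hij.trans_le (Fin.le_last j)).ne)).det : ℤ) : ZMod 2) else 0) =
      if i < j ∧ f i = f j ∧ Surjective f then 1 else 0 := fun i j => by
    by_cases hij : i < j
    · rw [dif_pos hij, det_pairRows_single hij]
      simp only [hij, true_and]
    · rw [dif_neg hij, if_neg fun h => hij h.1]
  simp only [sgnFormula_eq_sum_det_pairRows, hterm]
  split_ifs with hf
  · obtain ⟨p, hp, huniq⟩ := existsUnique_lt_apply_eq_of_surjective hf
    rw [← Fintype.sum_prod_type', Fintype.sum_eq_single p fun q hq => ?_]
    · simp [hp, hf]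
    · exact if_neg fun hq' => hq (huniq q ⟨hq'.1, hq'.2.1⟩)
  · simp [hf]

theorem sgnFormula_comp_perm (m : ℕ) (v : Fin (m+2) → Fin (m+1) → ℤ)
    (σ : Equiv.Perm (Fin (m+2))) : sgnFormula m (v ∘ σ) = sgnFormula m v := by
  refine congrFun (IsMultiAdditive.ext_single ((isMultiAdditive_sgnFormula m).comp_perm σ)
    (isMultiAdditive_sgnFormula m) fun f => ?_) v
  change sgnFormula m (fun a => Pi.single ((f ∘ σ) a) 1) = _
  simp only [sgnFormula_single, Surjective.of_comp_iff f σ.surjective]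

theorem surjective_cons_self_iff {n : ℕ} {β : Type*} {f : Fin (n+1) → β} :
    Surjective (Fin.cons (f 0) f : Fin (n+2) → β) ↔ Surjective f := by
  simp only [← Set.range_eq_univ, Fin.range_cons, Set.insert_eq_of_mem (Set.mem_range_self _)]

theorem sgnFormula_cons_head (m : ℕ) (w : Fin (m+1) → Fin (m+1) → ℤ) :
    sgnFormula m (Fin.cons (w 0) w) = ((Matrix.of w).det : ZMod 2) := by
  refine congrFun (IsMultiAdditive.ext_single (s := fun w => sgnFormula m (Fin.cons (w 0) w))
    ((isMultiAdditive_sgnFormula m).comp_cons_head (sgnFormula_comp_perm m))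
    (isMultiAdditive_det.map (Int.castAddHom (ZMod 2))) fun f => ?_) w
  have hcons : (Fin.cons (Pi.single (f 0) 1) fun a => Pi.single (f a) 1 :
      Fin (m+2) → Fin (m+1) → ℤ) =
      fun a => Pi.single ((Fin.cons (f 0) f : Fin (m+2) → _) a) 1 := by
    funext a
    cases a using Fin.cases <;> rfl
  simp only [hcons, sgnFormula_single, surjective_cons_self_iff, Finite.surjective_iff_bijective,
    Int.coe_castAddHom]
  exact (det_of_single_cast_zmod_two f).symm

theorem sgnConds_sgnFormula (m : ℕ) : SgnConds m (sgnFormula m) := by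
  refine ⟨isMultiAdditive_sgnFormula m, sgnFormula_comp_perm m, fun x r => ?_⟩
  have := sgnFormula_cons_head m (Fin.cons x r)
  rw [Fin.cons_zero] at this
  rw [this, ← Matrix.det_transpose]
  rfl

theorem exists_perm_apply_zero_apply_one {n : ℕ} {i j : Fin (n+2)} (hij : i ≠ j) :
    ∃ σ : Equiv.Perm (Fin (n+2)), σ 0 = i ∧ σ 1 = j := by
  refine ⟨Equiv.swap 0 i * Equiv.swap 1 (Equiv.swap 0 i j), ?_, by simp⟩
  have h0 : Equiv.swap 0 i j ≠ 0 := by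
    rw [ne_eq, Equiv.swap_apply_eq_iff, Equiv.swap_apply_left]
    exact hij.symm
  simp [Equiv.swap_apply_of_ne_of_ne Fin.zero_ne_one h0.symm]

theorem SgnConds.apply_eq_of_apply_eq {m : ℕ} {s t : (Fin (m+2) → Fin (m+1) → ℤ) → ZMod 2}
    (hs : SgnConds m s) (ht : SgnConds m t) {v : Fin (m+2) → Fin (m+1) → ℤ} {i j : Fin (m+2)}
    (hij : i ≠ j) (h : v i = v j) : s v = t v := by
  obtain ⟨σ, h0, h1⟩ := exists_perm_apply_zero_apply_one hij
  have hv : v ∘ σ = Fin.cons (v i) (Fin.cons (v i) (Fin.tail (Fin.tail (v ∘ σ)))) := by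
    conv_lhs => rw [← Fin.cons_self_tail (v ∘ σ), ← Fin.cons_self_tail (Fin.tail (v ∘ σ))]
    simp [Fin.tail, h0, h1, h]
  rw [← hs.2.1 v σ, ← ht.2.1 v σ, hv, hs.2.2, ht.2.2]

theorem SgnConds.unique {m : ℕ} {s t : (Fin (m+2) → Fin (m+1) → ℤ) → ZMod 2}
    (hs : SgnConds m s) (ht : SgnConds m t) : s = t :=
  IsMultiAdditive.ext_single hs.1 ht.1 fun f => by
    obtain ⟨i, j, hij, h⟩ := Fintype.exists_ne_map_eq_of_card_lt f (by simp)
    exact hs.apply_eq_of_apply_eq ht hij (congrArg (Pi.single · 1) h)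

/-- For `n = m+1 ≥ 1` there is exactly one map
`sgn : (ℤⁿ)^{n+1} → ℤ/2ℤ` which is additive in each argument, symmetric, and satisfies
`sgn(l,l,r₁,…,r_{n−1}) ≡ det(l,r₁,…,r_{n−1}) (mod 2)`; moreover it is given by the
explicit Vostokov–Fesenko formula. -/
theorem statement9 (m : ℕ) :
    (∃! s : (Fin (m+2) → (Fin (m+1) → ℤ)) → ZMod 2, SgnConds m s) ∧
    SgnConds m (sgnFormula m) :=
  ⟨⟨sgnFormula m, sgnConds_sgnFormula m, fun _ hs => hs.unique (sgnConds_sgnFormula m)⟩,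
    sgnConds_sgnFormula m⟩
end

section
/- Let A → B be a homomorphism of commutative rings. Let M be a module over the formal power series ring A[[t]] such that tᵏ·M = 0 for some integer k ≥ 0 and such that there exists a short exact sequence 0 → P → Q → M → 0 of A[[t]]-modules with P and Q finitely generated projective A[[t]]-modules. Then Tor₁^{A[[t]]}(M, B[[t]]) = 0, where B[[t]] is regarded as an A[[t]]-module via the coefficientwise ring homomorphism A[[t]] → B[[t]]. -/
/-!
Multiplication by `tᵏ` on `Q` lands in `g(P)` because `tᵏ` kills `M`, so there is `h : Q → P` with
`h ∘ g = tᵏ`. After tensoring with `N = B[[t]]` the kernel of `P ⊗ N → Q ⊗ N` is therefore killed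
by `tᵏ`; but `tᵏ` is a nonzerodivisor on `N`, hence on the flat tensor product `P ⊗ N`, so this
kernel, which is `Tor₁(M, N)` computed from the resolution of `M`, vanishes. Mathlib's `Tor`
resolves the second variable instead, and a diagram chase through a presentation
`0 → K → F → N → 0` with `F` projective transfers the vanishing.
-/

noncomputable section

open CategoryTheory

open Function LinearMap TensorProduct

section

variable {R : Type*} [CommRing R] {P Q M N : Type*} [AddCommGroup P] [AddCommGroup Q]
  [AddCommGroup M] [AddCommGroup N] [Module R P] [Module R Q] [Module R M] [Module R N]

lemma rTensor_lTensor_comm {P' N' : Type*} [AddCommGroup P'] [AddCommGroup N'] [Module R P']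
    [Module R N'] (f : P →ₗ[R] P') (g : N →ₗ[R] N') (x : P ⊗[R] N) :
    f.rTensor N' (g.lTensor P x) = g.lTensor P' (f.rTensor N x) := by
  rw [← LinearMap.comp_apply, ← LinearMap.comp_apply, rTensor_comp_lTensor, lTensor_comp_rTensor]

lemma exists_comp_eq_smul_id {g : P →ₗ[R] Q} {π : Q →ₗ[R] M} (hg : Injective g)
    (hgπ : Exact g π) {r : R} (hM : ∀ m : M, r • m = 0) :
    ∃ h : Q →ₗ[R] P, h ∘ₗ g = r • LinearMap.id := by
  have hr : ∀ q, (r • LinearMap.id : Q →ₗ[R] Q) q ∈ range g := fun q =>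
    hgπ.linearMap_ker_eq ▸ by simp [hM]
  refine ⟨(LinearEquiv.ofInjective g hg).symm ∘ₗ (r • LinearMap.id).codRestrict _ hr, ?_⟩
  ext p
  apply hg
  simp [LinearEquiv.ofInjective_symm_apply]

lemma injective_rTensor_of_smul_eq_zero [Module.Flat R P] {g : P →ₗ[R] Q} {π : Q →ₗ[R] M}
    (hg : Injective g) (hgπ : Exact g π) {r : R} (hM : ∀ m : M, r • m = 0)
    (hN : IsSMulRegular N r) : Injective (g.rTensor N) := by
  obtain ⟨h, hhg⟩ := exists_comp_eq_smul_id hg hgπ hM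
  refine (injective_iff_map_eq_zero _).mpr fun x hx => (hN.lTensor P).right_eq_zero_of_smul ?_
  calc r • x = (h ∘ₗ g).rTensor N x := by
        rw [hhg, rTensor_smul, rTensor_id, LinearMap.smul_apply, LinearMap.id_apply]
    _ = 0 := by rw [rTensor_comp, LinearMap.comp_apply, hx, map_zero]

lemma injective_lTensor_of_injective_rTensor {K F : Type*} [AddCommGroup K] [AddCommGroup F]
    [Module R K] [Module R F] [Module.Flat R Q] [Module.Flat R F]
    {g : P →ₗ[R] Q} {π : Q →ₗ[R] M} (hgπ : Exact g π) (hπ : Surjective π)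
    {ι : K →ₗ[R] F} {ρ : F →ₗ[R] N} (hι : Injective ι) (hιρ : Exact ι ρ) (hρ : Surjective ρ)
    (hg : Injective (g.rTensor N)) :
    Injective (ι.lTensor M) := by
  refine (injective_iff_map_eq_zero _).mpr fun x hx => ?_
  obtain ⟨y, rfl⟩ := π.rTensor_surjective K hπ x
  obtain ⟨z, hz⟩ : ι.lTensor Q y ∈ range (g.rTensor F) := by
    rw [← (rTensor_exact F hgπ hπ).linearMap_ker_eq, mem_ker, rTensor_lTensor_comm, hx]
  obtain ⟨w, rfl⟩ : z ∈ range (ι.lTensor P) := by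
    rw [← (lTensor_exact P hιρ hρ).linearMap_ker_eq, mem_ker]
    apply hg
    rw [rTensor_lTensor_comm, hz, ← LinearMap.comp_apply, ← lTensor_comp,
      hιρ.linearMap_comp_eq_zero, lTensor_zero, LinearMap.zero_apply, map_zero]
  have hy : y = g.rTensor K w :=
    Module.Flat.lTensor_preserves_injective_linearMap ι hι (by rw [← hz, rTensor_lTensor_comm])
  rw [hy, ← LinearMap.comp_apply, ← rTensor_comp, hgπ.linearMap_comp_eq_zero, rTensor_zero,
    LinearMap.zero_apply]

end

universe u

lemma isZero_Tor_one_of_injective_lTensor {R : Type u} [CommRing R] (M N : ModuleCat.{u} R)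
    (h : ∀ {K F : Type u} [AddCommGroup K] [AddCommGroup F] [Module R K] [Module R F]
      [Module.Projective R F] (ι : K →ₗ[R] F) (ρ : F →ₗ[R] N), Injective ι → Exact ι ρ →
        Surjective ρ → Injective (ι.lTensor M)) :
    Limits.IsZero (((Tor (ModuleCat R) 1).obj M).obj N) := by
  obtain ⟨Pres⟩ := HasProjectiveResolution.out (Z := N)
  refine .of_iso ((HomologicalComplex.exactAt_iff_isZero_homology _ _).mp ?_)
    (Pres.isoLeftDerivedObj _ 1)
  rw [HomologicalComplex.exactAt_iff' _ 2 1 0 (by simp) (by simp),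
    ShortComplex.ShortExact.moduleCat_exact_iff_function_exact]
  set d₁ := (Pres.complex.d 1 0).hom
  set d₂ := (Pres.complex.d 2 1).hom
  set ρ := (Pres.π.f 0).hom
  have hρ : Surjective ρ := (ModuleCat.epi_iff_surjective _).mp inferInstance
  have h₁ : Exact d₁ ρ :=
    (ShortComplex.ShortExact.moduleCat_exact_iff_function_exact _).mp Pres.exact₀
  have h₂ : Exact d₂ d₁ :=
    (ShortComplex.ShortExact.moduleCat_exact_iff_function_exact _).mp (Pres.exact_succ 0)
  let p := d₁.codRestrict (ker ρ) fun x => h₁.apply_apply_eq_zero x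
  have hp : Surjective p := fun ⟨x, hx⟩ => by
    obtain ⟨y, rfl⟩ := (h₁ x).mp hx
    exact ⟨y, rfl⟩
  have hd₁ : d₁ = (ker ρ).subtype ∘ₗ p := rfl
  have := lTensor_exact M ((Submodule.injective_subtype _).comp_exact_iff_exact.mp (hd₁ ▸ h₂)) hp
  show Exact (d₂.lTensor M) (d₁.lTensor M)
  rw [hd₁, lTensor_comp]
  exact (h _ ρ (Submodule.injective_subtype _) (exact_subtype_ker_map ρ) hρ)
    |>.comp_exact_iff_exact.mpr this

lemma isZero_Tor_one_of_smul_eq_zero {R : Type u} [CommRing R] {P Q M N : Type u}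
    [AddCommGroup P] [AddCommGroup Q] [AddCommGroup M] [AddCommGroup N]
    [Module R P] [Module R Q] [Module R M] [Module R N] [Module.Flat R P] [Module.Flat R Q]
    {g : P →ₗ[R] Q} {π : Q →ₗ[R] M} (hg : Injective g) (hπ : Surjective π) (hgπ : Exact g π)
    {r : R} (hM : ∀ m : M, r • m = 0) (hN : IsSMulRegular N r) :
    Limits.IsZero (((Tor (ModuleCat R) 1).obj (.of R M)).obj (.of R N)) :=
  isZero_Tor_one_of_injective_lTensor _ _ fun _ _ hι hιρ hρ =>
    injective_lTensor_of_injective_rTensor hgπ hπ hι hιρ hρ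
      (injective_rTensor_of_smul_eq_zero hg hgπ hM hN)

lemma PowerSeries.isSMulRegular_X_pow_of_map {A B : Type*} [CommRing A] [CommRing B]
    (f : A →+* B) (k : ℕ) :
    letI : Module (PowerSeries A) (PowerSeries B) :=
      Module.compHom (PowerSeries B) (PowerSeries.map f)
    IsSMulRegular (PowerSeries B) (PowerSeries.X ^ k : PowerSeries A) := by
  intro x y hxy
  change PowerSeries.map f (PowerSeries.X ^ k) * x = PowerSeries.map f (PowerSeries.X ^ k) * y
    at hxy
  rw [map_pow, PowerSeries.map_X] at hxy
  exact PowerSeries.X_pow_mul_injective hxy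

/-- Let `A → B` be a homomorphism of commutative rings and let `M`
be an `A[[t]]`-module annihilated by a power of `t` and admitting a length-one
resolution by finitely generated projective `A[[t]]`-modules. Then
`Tor₁^{A[[t]]}(M, B[[t]]) = 0`, where `B[[t]]` is an `A[[t]]`-module via the
coefficientwise homomorphism `A[[t]] → B[[t]]`. -/
theorem statement16 (A B : Type) [CommRing A] [CommRing B] (f : A →+* B)
    (M : Type) [AddCommGroup M] [Module (PowerSeries A) M]
    (hM : ∃ k : ℕ, ∀ x : M, (PowerSeries.X ^ k : PowerSeries A) • x = 0)
    (hres : ∃ (P Q : ModuleCat (PowerSeries A)) (g : P ⟶ Q)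
        (π : Q ⟶ ModuleCat.of (PowerSeries A) M),
      Module.Finite (PowerSeries A) P ∧ Module.Projective (PowerSeries A) P ∧
      Module.Finite (PowerSeries A) Q ∧ Module.Projective (PowerSeries A) Q ∧
      Function.Injective g ∧ Function.Surjective π ∧ Function.Exact g π) :
    letI : Module (PowerSeries A) (PowerSeries B) :=
      Module.compHom (PowerSeries B) (PowerSeries.map f)
    Limits.IsZero
      (((Tor (ModuleCat (PowerSeries A)) 1).obj (ModuleCat.of (PowerSeries A) M)).obj
        (ModuleCat.of (PowerSeries A) (PowerSeries B))) := by
  let : Module (PowerSeries A) (PowerSeries B) :=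
    Module.compHom (PowerSeries B) (PowerSeries.map f)
  obtain ⟨k, hk⟩ := hM
  obtain ⟨P, Q, g, π, -, _, -, _, hg, hπ, hgπ⟩ := hres
  exact isZero_Tor_one_of_smul_eq_zero (g := g.hom) (π := π.hom) hg hπ hgπ hk
    (PowerSeries.isSMulRegular_X_pow_of_map f k)
end
end

section
/- Let A → B be a homomorphism of commutative rings and let M be a module over the formal power series ring A[[t]] such that tᵏ·M = 0 for some integer k ≥ 0. Then the natural B-module homomorphism M ⊗_A B → M ⊗_{A[[t]]} B[[t]], m ⊗ b ↦ m ⊗ b (with b viewed as a constant power series), is an isomorphism; here M is regarded as an A-module via the inclusion of constants A → A[[t]], and B[[t]] is regarded as an A[[t]]-algebra via the coefficientwise homomorphism A[[t]] → B[[t]]. -/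
/-!
The inverse is `m ⊗ g ↦ ∑_{i<k} tⁱm ⊗ gᵢ`, the sum being finite because `tᵏ` kills `M`. The work is
to see that this pairing is `A[[t]]`-balanced: the scalars `r` for which `f (r • m) g = f m (r • g)` form
a subring, which contains the constants, `t` (the one boundary term is `tᵏm ⊗ g_{k-1} = 0`) and
the ideal `tᵏ A[[t]]`, hence all of `A[[t]]`.
-/

noncomputable section

open scoped TensorProduct

section Stmt17

variable (A B : Type) [CommRing A] [CommRing B] [Algebra A B]
variable (M : Type) [AddCommGroup M] [Module (PowerSeries A) M]
variable [Module A M] [IsScalarTower A (PowerSeries A) M]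

/-- `B[[t]]` as a module over `A[[t]]` via the coefficientwise homomorphism
`A[[t]] → B[[t]]` induced by `A → B`. -/
def psModule : Module (PowerSeries A) (PowerSeries B) :=
  Module.compHom (PowerSeries B) (PowerSeries.map (algebraMap A B))

attribute [local instance] psModule

/-- The natural map `M ⊗_A B → M ⊗_{A[[t]]} B[[t]]`, `m ⊗ b ↦ m ⊗ b` (with `b` viewed
as a constant power series). -/
def canonicalTensorMap : (M ⊗[A] B) →+ (M ⊗[PowerSeries A] PowerSeries B) := by
  refine TensorProduct.liftAddHom
    { toFun := fun m =>
        { toFun := fun b => m ⊗ₜ[PowerSeries A] ((@PowerSeries.C B _) b)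
          map_zero' := by simp
          map_add' := by
            intro b b'
            simp [TensorProduct.tmul_add] }
      map_zero' := by
        ext b
        simp [TensorProduct.zero_tmul]
      map_add' := by
        intro m m'
        ext b
        simp [TensorProduct.add_tmul] } ?_
  intro a m b
  show (a • m) ⊗ₜ[PowerSeries A] (@PowerSeries.C B _ b) =
    m ⊗ₜ[PowerSeries A] (@PowerSeries.C B _ (a • b))
  have h1 : a • m = (algebraMap A (PowerSeries A) a) • m := (algebraMap_smul _ a m).symm
  have h2 : (@PowerSeries.C B _) (a • b) =
      (algebraMap A (PowerSeries A) a) • (@PowerSeries.C B _ b) := by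
    show (@PowerSeries.C B _) (a • b) =
      (PowerSeries.map (algebraMap A B)) (algebraMap A (PowerSeries A) a) * (@PowerSeries.C B _ b)
    rw [Algebra.smul_def]
    have : (PowerSeries.map (algebraMap A B)) (algebraMap A (PowerSeries A) a) =
        @PowerSeries.C B _ (algebraMap A B a) := by
      have : (algebraMap A (PowerSeries A)) a = @PowerSeries.C A _ a := rfl
      rw [this, PowerSeries.map_C]
    rw [this, ← map_mul]
  rw [h1, h2, TensorProduct.smul_tmul]
  rfl

end Stmt17

open PowerSeries Finset TensorProduct

theorem PowerSeries.exists_eq_sum_range_add_X_pow_mul {R : Type*} [CommRing R] (g : R⟦X⟧)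
    (k : ℕ) : ∃ h : R⟦X⟧, g = ∑ i ∈ range k, C (coeff i g) * X ^ i + X ^ k * h := by
  obtain ⟨h, hh⟩ : X ^ k ∣ g - ∑ i ∈ range k, C (coeff i g) * X ^ i := by
    refine X_pow_dvd_iff.2 fun j hj => ?_
    simp [map_sum, hj]
  exact ⟨h, by rw [← hh]; ring⟩

namespace AddMonoidHom

variable {R M N P : Type*} [CommRing R] [AddCommGroup M] [AddCommGroup N] [AddCommGroup P]
  [Module R M] [Module R N]

variable (R) in
def balancedSubring (f : M →+ N →+ P) : Subring R where
  carrier := {r | ∀ m n, f (r • m) n = f m (r • n)}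
  one_mem' := by simp
  zero_mem' := by simp
  add_mem' := by
    intro r s hr hs m n
    simp only [add_smul, map_add, AddMonoidHom.add_apply, hr m n, hs m n]
  neg_mem' := by
    intro r hr m n
    simp only [neg_smul, map_neg, AddMonoidHom.neg_apply, hr m n]
  mul_mem' := by
    intro r s hr hs m n
    simp only [mul_smul, hr _ n, hs m _, smul_comm s r]

theorem mem_balancedSubring {f : M →+ N →+ P} {r : R} :
    r ∈ f.balancedSubring R ↔ ∀ m n, f (r • m) n = f m (r • n) := Iff.rfl

end AddMonoidHom

section

variable (A B : Type) [CommRing A] [CommRing B] [Algebra A B]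
variable (M : Type) [AddCommGroup M] [Module (PowerSeries A) M]

attribute [local instance] psModule

variable {A B M} in
theorem tmul_map_mul (m : M) (r : A⟦X⟧) (g : B⟦X⟧) :
    m ⊗ₜ[A⟦X⟧] (PowerSeries.map (algebraMap A B) r * g) = (r • m) ⊗ₜ g :=
  (smul_tmul r m g).symm

variable [Module A M]

def truncatedPairing (k : ℕ) : M →+ B⟦X⟧ →+ M ⊗[A] B :=
  AddMonoidHom.mk'
    (fun m => AddMonoidHom.mk' (fun g => ∑ i ∈ range k, ((X : A⟦X⟧) ^ i • m) ⊗ₜ coeff i g)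
      (by simp [tmul_add, sum_add_distrib]))
    (by intro m m'; ext g; simp [add_tmul, sum_add_distrib])

theorem truncatedPairing_apply (k : ℕ) (m : M) (g : B⟦X⟧) :
    truncatedPairing A B M k m g = ∑ i ∈ range k, ((X : A⟦X⟧) ^ i • m) ⊗ₜ coeff i g := rfl

variable {A B M}

theorem mem_balancedSubring_truncatedPairing_iff {k : ℕ} {r : A⟦X⟧} :
    r ∈ (truncatedPairing A B M k).balancedSubring A⟦X⟧ ↔
      ∀ m g, truncatedPairing A B M k (r • m) g =
        truncatedPairing A B M k m (PowerSeries.map (algebraMap A B) r * g) :=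
  Iff.rfl

theorem X_mem_balancedSubring_truncatedPairing (k : ℕ)
    (hM : ∀ x : M, (X ^ k : A⟦X⟧) • x = 0) :
    X ∈ (truncatedPairing A B M k).balancedSubring A⟦X⟧ := by
  refine mem_balancedSubring_truncatedPairing_iff.2 fun m g => ?_
  cases k with
  | zero => simp [truncatedPairing_apply]
  | succ k =>
    rw [truncatedPairing_apply, truncatedPairing_apply, map_X, sum_range_succ, sum_range_succ']
    simp only [smul_smul, ← pow_succ, hM, coeff_succ_X_mul, coeff_zero_X_mul, zero_tmul,
      tmul_zero, add_zero]

theorem X_pow_mul_mem_balancedSubring_truncatedPairing (k : ℕ)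
    (hM : ∀ x : M, (X ^ k : A⟦X⟧) • x = 0) (s : A⟦X⟧) :
    X ^ k * s ∈ (truncatedPairing A B M k).balancedSubring A⟦X⟧ := by
  refine mem_balancedSubring_truncatedPairing_iff.2 fun m g => ?_
  rw [mul_smul, hM, map_zero, AddMonoidHom.zero_apply, truncatedPairing_apply, map_mul, map_pow,
    map_X, mul_assoc]
  refine (sum_eq_zero fun i hi => ?_).symm
  rw [coeff_X_pow_mul', if_neg (not_le.2 (mem_range.1 hi)), tmul_zero]

variable [IsScalarTower A (PowerSeries A) M]

theorem C_mem_balancedSubring_truncatedPairing (k : ℕ) (a : A) :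
    C a ∈ (truncatedPairing A B M k).balancedSubring A⟦X⟧ := by
  refine mem_balancedSubring_truncatedPairing_iff.2 fun m g => ?_
  have hC (x : M) : C a • x = a • x := algebraMap_smul A⟦X⟧ a x
  rw [truncatedPairing_apply, truncatedPairing_apply, map_C, ← smul_eq_C_mul]
  refine sum_congr rfl fun i _ => ?_
  rw [smul_comm, hC, coeff_smul, algebraMap_smul, smul_tmul]

theorem mem_balancedSubring_truncatedPairing (k : ℕ)
    (hM : ∀ x : M, (X ^ k : A⟦X⟧) • x = 0) (r : A⟦X⟧) :
    r ∈ (truncatedPairing A B M k).balancedSubring A⟦X⟧ := by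
  obtain ⟨s, hs⟩ := exists_eq_sum_range_add_X_pow_mul r k
  rw [hs]
  refine add_mem (sum_mem fun i _ => mul_mem ?_ (pow_mem ?_ i)) ?_
  · exact C_mem_balancedSubring_truncatedPairing k _
  · exact X_mem_balancedSubring_truncatedPairing k hM
  · exact X_pow_mul_mem_balancedSubring_truncatedPairing k hM s

def canonicalTensorMapInv (k : ℕ) (hM : ∀ x : M, (X ^ k : A⟦X⟧) • x = 0) :
    M ⊗[A⟦X⟧] B⟦X⟧ →+ M ⊗[A] B :=
  liftAddHom (truncatedPairing A B M k) fun r =>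
    AddMonoidHom.mem_balancedSubring.1 (mem_balancedSubring_truncatedPairing k hM r)

theorem canonicalTensorMapInv_tmul (k : ℕ) (hM : ∀ x : M, (X ^ k : A⟦X⟧) • x = 0) (m : M)
    (g : B⟦X⟧) :
    canonicalTensorMapInv k hM (m ⊗ₜ g) = ∑ i ∈ range k, ((X : A⟦X⟧) ^ i • m) ⊗ₜ coeff i g :=
  rfl

theorem canonicalTensorMap_tmul (m : M) (b : B) :
    canonicalTensorMap A B M (m ⊗ₜ b) = m ⊗ₜ C b := rfl

theorem leftInverse_canonicalTensorMapInv (k : ℕ) (hM : ∀ x : M, (X ^ k : A⟦X⟧) • x = 0) :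
    Function.LeftInverse (canonicalTensorMapInv k hM) (canonicalTensorMap A B M) := by
  intro x
  induction x using TensorProduct.induction_on with
  | zero => simp
  | add x y hx hy => simp only [map_add, hx, hy]
  | tmul m b =>
    rw [canonicalTensorMap_tmul, canonicalTensorMapInv_tmul]
    cases k with
    | zero => simp [show m = 0 by simpa using hM m]
    | succ k => simp [sum_range_succ', coeff_C]

theorem rightInverse_canonicalTensorMapInv (k : ℕ) (hM : ∀ x : M, (X ^ k : A⟦X⟧) • x = 0) :
    Function.RightInverse (canonicalTensorMapInv k hM) (canonicalTensorMap A B M) := by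
  intro x
  induction x using TensorProduct.induction_on with
  | zero => simp
  | add x y hx hy => simp only [map_add, hx, hy]
  | tmul m g =>
    obtain ⟨h, hg⟩ := exists_eq_sum_range_add_X_pow_mul g k
    have hXk : m ⊗ₜ[A⟦X⟧] (X ^ k * h) = 0 := by
      rw [← map_X (algebraMap A B), ← map_pow, tmul_map_mul, hM, zero_tmul]
    calc canonicalTensorMap A B M (canonicalTensorMapInv k hM (m ⊗ₜ g))
        = ∑ i ∈ range k, m ⊗ₜ (C (coeff i g) * X ^ i) := by
          rw [canonicalTensorMapInv_tmul, map_sum]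
          refine sum_congr rfl fun i _ => ?_
          rw [canonicalTensorMap_tmul, ← tmul_map_mul, map_pow, map_X, mul_comm]
      _ = m ⊗ₜ g := by
          conv_rhs => rw [hg]
          rw [tmul_add, hXk, add_zero, tmul_sum]

variable (A B M)

/-- Let `A → B` be a homomorphism of commutative rings and `M` an
`A[[t]]`-module with `tᵏ·M = 0` for some `k ≥ 0`. Then the natural map
`M ⊗_A B → M ⊗_{A[[t]]} B[[t]]`, `m ⊗ b ↦ m ⊗ b`, is an isomorphism. -/
theorem statement17 (k : ℕ) (hM : ∀ x : M, (PowerSeries.X ^ k : PowerSeries A) • x = 0) :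
    Function.Bijective (canonicalTensorMap A B M) :=
  ⟨(leftInverse_canonicalTensorMapInv k hM).injective,
    (rightInverse_canonicalTensorMapInv k hM).surjective⟩

end
end
end
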